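/- arXiv:1806.05095 — 13 statements merged into one kernel-verified Lean document; each statement's English description precedes it below -/
import Mathlib

section
/- If X_1, ..., X_n are independent nonnegative random variables, each with finite mean, then the k-th order statistic X_{k:n} satisfies E[(X_{k:n})^{n+1-k}] < ∞ for every k ∈ {1,...,n}. -/
/-!
Put `m = n - k` (with the 0-indexed `k`, this is the informal `n + 1 - k`). At least `m` of the
values are `≥ X_{k:n}`, so `X_{k:n}^m` is bounded by the product of some `m` of the `X_i`, hence
by the sum over all `m`-element sets `S` of `∏_{i ∈ S} X_i`. By independence each such product is
integrable, being built up one independent integrable factor at a time.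
-/

open MeasureTheory ProbabilityTheory

/-- The `k`-th order statistic (0-indexed) of the values `X 0 ω, ..., X (n-1) ω`. -/
noncomputable def orderStat {Ω : Type*} {n : ℕ} (X : Fin n → Ω → ℝ) (k : Fin n) (ω : Ω) : ℝ :=
  X (Tuple.sort (fun i => X i ω) k) ω

section TupleSort

variable {α : Type*} [LinearOrder α] [TopologicalSpace α] [OrderClosedTopology α]
  [SecondCountableTopology α] [MeasurableSpace α] [OpensMeasurableSpace α] {n : ℕ}

theorem measurableSet_sort_eq (σ : Equiv.Perm (Fin n)) :
    MeasurableSet {x : Fin n → α | Tuple.sort x = σ} := by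
  simp_rw [eq_comm (a := Tuple.sort _), Tuple.eq_sort_iff, Monotone, Function.comp_apply]
  have hle (i j : Fin n) : Measurable fun x : Fin n → α => x i ≤ x j :=
    (measurableSet_le (measurable_pi_apply i) (measurable_pi_apply j)).mem
  have heq (i j : Fin n) : Measurable fun x : Fin n → α => x i = x j :=
    (measurableSet_eq_fun (measurable_pi_apply i) (measurable_pi_apply j)).mem
  exact Measurable.setOf (by fun_prop)

theorem measurable_apply_sort (k : Fin n) :
    Measurable fun x : Fin n → α => x (Tuple.sort x k) := by
  intro s hs
  have : (fun x : Fin n → α => x (Tuple.sort x k)) ⁻¹' s =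
      ⋃ σ : Equiv.Perm (Fin n), {x | Tuple.sort x = σ} ∩ (fun x => x (σ k)) ⁻¹' s := by
    ext x
    simp
  rw [this]
  exact .iUnion fun σ => (measurableSet_sort_eq σ).inter (measurable_pi_apply _ hs)

end TupleSort

theorem pow_apply_sort_le_sum_prod {R : Type*} [CommSemiring R] [LinearOrder R] [IsOrderedRing R]
    {n : ℕ} {x : Fin n → R} (hx : ∀ i, 0 ≤ x i) (k : Fin n) :
    x (Tuple.sort x k) ^ (n - (k : ℕ)) ≤
      ∑ S ∈ Finset.powersetCard (n - (k : ℕ)) Finset.univ, ∏ i ∈ S, x i := by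
  set σ := Tuple.sort x
  have hcard : ((Finset.Ici k).map σ.toEmbedding).card = n - (k : ℕ) := by simp
  calc x (σ k) ^ (n - (k : ℕ)) = ∏ _j ∈ Finset.Ici k, x (σ k) := by simp
    _ ≤ ∏ j ∈ Finset.Ici k, x (σ j) :=
      Finset.prod_le_prod (fun _ _ => hx _)
        fun _ hj => Tuple.monotone_sort x (Finset.mem_Ici.mp hj)
    _ = ∏ i ∈ (Finset.Ici k).map σ.toEmbedding, x i := by simp
    _ ≤ ∑ S ∈ Finset.powersetCard (n - (k : ℕ)) Finset.univ, ∏ i ∈ S, x i :=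
      Finset.single_le_sum (f := fun S => ∏ i ∈ S, x i)
        (fun _ _ => Finset.prod_nonneg fun _ _ => hx _)
        (Finset.mem_powersetCard.2 ⟨Finset.subset_univ _, hcard⟩)

theorem ProbabilityTheory.iIndepFun.integrable_finsetProd {Ω ι E : Type*} [MeasurableSpace Ω]
    {μ : Measure Ω} [IsFiniteMeasure μ] [NormedCommRing E] [NormMulClass E]
    [MeasurableSpace E] [BorelSpace E] [SecondCountableTopology E] {X : ι → Ω → E}
    (hindep : iIndepFun X μ) (hint : ∀ i, Integrable (X i) μ) (s : Finset ι) :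
    Integrable (∏ i ∈ s, X i) μ := by
  classical
  induction s using Finset.induction_on with
  | empty => exact integrable_const 1
  | insert i s hi ih =>
    rw [Finset.prod_insert hi, mul_comm]
    have hindep_i := hindep.indepFun_finsetProd_of_notMem₀ (fun j => (hint j).aemeasurable) hi
    exact hindep_i.integrable_mul ih (hint i)

theorem exists_moment_orderStat_general
    {Ω : Type*} [MeasurableSpace Ω] (P : Measure Ω) [IsProbabilityMeasure P]
    {n : ℕ} (X : Fin n → Ω → ℝ)
    (hnonneg : ∀ i ω, 0 ≤ X i ω)
    (hindep : iIndepFun X P)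
    (hint : ∀ i, Integrable (X i) P) :
    ∀ k : Fin n, Integrable (fun ω => (orderStat X k ω) ^ (n - (k : ℕ))) P := by
  intro k
  have hmeas : AEMeasurable (orderStat X k) P :=
    (measurable_apply_sort k).comp_aemeasurable
      (aemeasurable_pi_lambda _ fun i => (hint i).aemeasurable)
  have hdom : Integrable (fun ω =>
      ∑ S ∈ Finset.powersetCard (n - (k : ℕ)) Finset.univ, ∏ i ∈ S, X i ω) P :=
    integrable_finsetSum _ fun S _ => by
      simpa only [Finset.prod_fn] using hindep.integrable_finsetProd hint S
  refine hdom.mono' (hmeas.pow_const _).aestronglyMeasurable (ae_of_all _ fun ω => ?_)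
  exact (Real.norm_of_nonneg (pow_nonneg (hnonneg _ ω) _)).trans_le
    (pow_apply_sort_le_sum_prod (hnonneg · ω) k)

theorem exists_moment_orderStat
    {Ω : Type*} [MeasurableSpace Ω] (P : Measure Ω) [IsProbabilityMeasure P]
    {n : ℕ} (X : Fin n → Ω → ℝ)
    (hmeas : ∀ i, Measurable (X i))
    (hnonneg : ∀ i ω, 0 ≤ X i ω)
    (hindep : iIndepFun X P)
    (hint : ∀ i, Integrable (X i) P) :
    ∀ k : Fin n, Integrable (fun ω => (orderStat X k ω) ^ (n - (k : ℕ))) P :=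
  exists_moment_orderStat_general P X hnonneg hindep hint
end

section
/- If X_1, ..., X_n are independent nonnegative random variables with E[X_i] = μ_i ∈ (0, ∞), then E[(X_{k:n})^{n+1-k}] ≤ Σ_{1≤i_1<...<i_{n+1-k}≤n} μ_{i_1} ⋯ μ_{i_{n+1-k}}, the (n+1-k)-th elementary symmetric polynomial in μ_1,...,μ_n. -/
/-!
At every sample point, the `n - k` largest of the values are at least `X_{k:n}`, so
`X_{k:n}^{n-k}` is bounded by one product of `n - k` distinct `X_i`, hence by the elementary
symmetric polynomial of degree `n - k` in the `X_i`. By independence, the expectation of each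
such product is the corresponding product of the means.
-/

open MeasureTheory ProbabilityTheory

open Finset

theorem Tuple.exists_card_eq_forall_apply_sort_le {α : Type*} [LinearOrder α] {n : ℕ}
    (f : Fin n → α) (k : Fin n) :
    ∃ s : Finset (Fin n), #s = n - k ∧ ∀ i ∈ s, f (sort f k) ≤ f i := by
  refine ⟨(Ici k).map (sort f).toEmbedding, by simp, ?_⟩
  simp only [mem_map_equiv, mem_Ici]
  intro i hi
  simpa using Tuple.monotone_sort f hi

theorem Finset.pow_card_le_sum_powersetCard_prod {ι R : Type*} [Fintype ι] [CommSemiring R]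
    [PartialOrder R] [IsOrderedRing R] {f : ι → R} (hf : ∀ i, 0 ≤ f i) {a : R} (ha : 0 ≤ a)
    {s : Finset ι} (hs : ∀ i ∈ s, a ≤ f i) :
    a ^ #s ≤ ∑ t ∈ univ.powersetCard #s, ∏ i ∈ t, f i :=
  calc a ^ #s = ∏ _ ∈ s, a := (prod_const a).symm
    _ ≤ ∏ i ∈ s, f i := prod_le_prod (fun _ _ ↦ ha) hs
    _ ≤ ∑ t ∈ univ.powersetCard #s, ∏ i ∈ t, f i :=
      single_le_sum (f := fun t ↦ ∏ i ∈ t, f i) (fun _ _ ↦ prod_nonneg fun i _ ↦ hf i)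
        (mem_powersetCard.2 ⟨subset_univ s, rfl⟩)

theorem orderStat_pow_le_sum_powersetCard_prod {Ω : Type*} {n : ℕ} {X : Fin n → Ω → ℝ}
    (hX : ∀ i ω, 0 ≤ X i ω) (k : Fin n) (ω : Ω) :
    orderStat X k ω ^ (n - k) ≤ ∑ t ∈ univ.powersetCard (n - k), ∏ i ∈ t, X i ω := by
  obtain ⟨s, hcard, hle⟩ := Tuple.exists_card_eq_forall_apply_sort_le (X · ω) k
  exact hcard ▸ pow_card_le_sum_powersetCard_prod (hX · ω) (hX _ ω) hle

section Independence

variable {Ω ι : Type*} [MeasurableSpace Ω] {P : Measure Ω} {X : ι → Ω → ℝ}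

theorem ProbabilityTheory.iIndepFun.integrable_finset_prod (hX : iIndepFun X P)
    (hint : ∀ i, Integrable (X i) P) (s : Finset ι) :
    Integrable (fun ω ↦ ∏ i ∈ s, X i ω) P := by
  have := hX.isProbabilityMeasure
  induction s using Finset.cons_induction with
  | empty => simp
  | cons a s ha ih =>
    have hind := hX.indepFun_finsetProd_of_notMem₀ (fun i ↦ (hint i).aemeasurable) ha
    rw [← prod_fn] at ih
    convert hind.integrable_mul ih (hint a) using 1
    ext ω
    simp [mul_comm]

theorem ProbabilityTheory.iIndepFun.integral_finset_prod (hX : iIndepFun X P)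
    (hmeas : ∀ i, AEStronglyMeasurable (X i) P) (s : Finset ι) :
    ∫ ω, ∏ i ∈ s, X i ω ∂P = ∏ i ∈ s, ∫ ω, X i ω ∂P := by
  convert (hX.precomp Subtype.val_injective (g := ((↑) : s → ι))).integral_fun_prod_eq_prod_integral
    (fun i ↦ hmeas i) using 1
  · exact integral_congr_ae (.of_forall fun ω ↦ (prod_coe_sort s (X · ω)).symm)
  · exact (prod_coe_sort s _).symm

end Independence

theorem moment_orderStat_le_esymm_general
    {Ω : Type*} [MeasurableSpace Ω] (P : Measure Ω)
    {n : ℕ} (X : Fin n → Ω → ℝ) (μ : Fin n → ℝ)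
    (hnonneg : ∀ i ω, 0 ≤ X i ω)
    (hindep : iIndepFun X P)
    (hint : ∀ i, Integrable (X i) P)
    (hmean : ∀ i, ∫ ω, X i ω ∂P = μ i) :
    ∀ k : Fin n,
      ∫ ω, (orderStat X k ω) ^ (n - (k : ℕ)) ∂P ≤
        ∑ s ∈ Finset.univ.powersetCard (n - (k : ℕ)), ∏ i ∈ s, μ i := by
  intro k
  have hprod := hindep.integrable_finset_prod hint
  calc ∫ ω, orderStat X k ω ^ (n - k) ∂P
      ≤ ∫ ω, ∑ t ∈ univ.powersetCard (n - k), ∏ i ∈ t, X i ω ∂P :=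
        integral_mono_of_nonneg (.of_forall fun ω ↦ pow_nonneg (hnonneg _ ω) _)
          (integrable_finsetSum _ fun t _ ↦ hprod t)
          (.of_forall (orderStat_pow_le_sum_powersetCard_prod hnonneg k))
    _ = ∑ t ∈ univ.powersetCard (n - k), ∏ i ∈ t, μ i := by
        rw [integral_finsetSum _ fun t _ ↦ hprod t]
        simp only [hindep.integral_finset_prod fun i ↦ (hint i).aestronglyMeasurable, hmean]

theorem moment_orderStat_le_esymm
    {Ω : Type*} [MeasurableSpace Ω] (P : Measure Ω) [IsProbabilityMeasure P]
    {n : ℕ} (X : Fin n → Ω → ℝ) (μ : Fin n → ℝ)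
    (hmeas : ∀ i, Measurable (X i))
    (hnonneg : ∀ i ω, 0 ≤ X i ω)
    (hindep : iIndepFun X P)
    (hint : ∀ i, Integrable (X i) P)
    (hmean : ∀ i, ∫ ω, X i ω ∂P = μ i)
    (hpos : ∀ i, 0 < μ i) :
    ∀ k : Fin n,
      ∫ ω, (orderStat X k ω) ^ (n - (k : ℕ)) ∂P ≤
        ∑ s ∈ Finset.univ.powersetCard (n - (k : ℕ)), ∏ i ∈ s, μ i :=
  moment_orderStat_le_esymm_general P X μ hnonneg hindep hint hmean
end

section
/- For any k ∈ {2,...,n}, the supremum of E[(X_{k:n})^{n+1-k}] over all choices of independent nonnegative random variables X_1,...,X_n with prescribed means E[X_i] = μ_i > 0 equals Σ_{1≤i_1<...<i_{n+1-k}≤n} μ_{i_1} ⋯ μ_{i_{n+1-k}}. In particular, for each M ≥ max_i μ_i, the two-valued independent random variables with P(X_i = M) = μ_i/M = 1 − P(X_i = 0) satisfy E[(X_{k:n})^{n+1-k}] ≥ (1 − max_i μ_i / M)^{k−1} Σ μ_{i_1}⋯μ_{i_{n+1-k}}. -/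
/-!
Upper bound: if `x₍₀₎ ≤ ⋯ ≤ x₍ₙ₋₁₎` are the sorted values of `x ∈ [0, ∞)ⁿ`, then
`x₍ₖ₎ ^ (n - k) ≤ x₍ₖ₎ ⋯ x₍ₙ₋₁₎ ≤ e_{n-k}(x)`; integrating and using independence,
`E[X₍ₖ₎ ^ (n - k)] ≤ e_{n-k}(E X₀, …, E Xₙ₋₁)`.

Lower bound: take `Xᵢ ∈ {0, M}` with `P(Xᵢ = M) = μᵢ / M`. As soon as `n - k` of the `Xᵢ` equal `M`,
so does `X₍ₖ₎`, hence `E[X₍ₖ₎ ^ (n - k)] ≥ M ^ (n - k) ∑_{#T = n - k} P({i | Xᵢ = M} = T)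
= ∑_T ∏_{i ∈ T} μᵢ ∏_{i ∉ T} (1 - μᵢ / M) ≥ (1 - max μ / M) ^ k e_{n-k}(μ)`,
which tends to `e_{n-k}(μ)` as `M → ∞`.
-/

open MeasureTheory ProbabilityTheory

open Finset

lemma pow_sort_le_esymm {n : ℕ} (f : Fin n → ℝ) (hf : ∀ i, 0 ≤ f i) (k : Fin n) :
    f (Tuple.sort f k) ^ (n - k) ≤ ∑ s ∈ univ.powersetCard (n - k), ∏ i ∈ s, f i := by
  set σ := Tuple.sort f
  have hcard : #(Ici k) = n - k := Fin.card_Ici k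
  calc f (σ k) ^ (n - k) = ∏ _j ∈ Ici k, f (σ k) := by rw [prod_const, hcard]
    _ ≤ ∏ j ∈ Ici k, f (σ j) :=
        prod_le_prod (fun _ _ ↦ hf _) fun _ hj ↦ Tuple.monotone_sort f (mem_Ici.mp hj)
    _ = ∏ i ∈ (Ici k).map σ.toEmbedding, f i := (prod_map (Ici k) σ.toEmbedding f).symm
    _ ≤ ∑ s ∈ univ.powersetCard (n - k), ∏ i ∈ s, f i :=
        single_le_sum (f := fun s ↦ ∏ i ∈ s, f i) (fun _ _ ↦ prod_nonneg fun i _ ↦ hf i)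
          (mem_powersetCard.mpr ⟨subset_univ _, by rw [card_map, hcard]⟩)

lemma le_sort_of_card_le {n : ℕ} (f : Fin n → ℝ) (k : Fin n) {a : ℝ}
    (h : n - k ≤ #{i | a ≤ f i}) : a ≤ f (Tuple.sort f k) := by
  set σ := Tuple.sort f
  have hmono : Monotone (f ∘ σ) := Tuple.monotone_sort f
  by_contra! hlt
  have hsub : ({i | a ≤ f i} : Finset (Fin n)) ⊆ (Ioi k).map σ.toEmbedding := by
    intro i hi
    refine mem_map.mpr ⟨σ.symm i, mem_Ioi.mpr ?_, σ.apply_symm_apply i⟩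
    by_contra! hle
    have := hmono hle
    simp only [Function.comp_apply, Equiv.apply_symm_apply] at this
    linarith [(mem_filter.mp hi).2]
  have := (card_le_card hsub).trans_eq ((card_map _).trans (Fin.card_Ioi k))
  omega

lemma integrable_of_ae_mem_finite {α : Type*} [MeasurableSpace α] [MeasurableSingletonClass α]
    {μ : Measure α} [IsFiniteMeasure μ] {s : Set α} (hs : s.Finite) (h : ∀ᵐ x ∂μ, x ∈ s)
    (f : α → ℝ) : Integrable f μ := by
  rw [← Measure.restrict_eq_self_of_ae_mem h, ← Set.biUnion_of_singleton s]
  exact (integrableOn_finite_biUnion hs).2 fun _ _ ↦ integrableOn_singleton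

lemma ae_pi_forall {ι α : Type*} [Fintype ι] [MeasurableSpace α] {ν : ι → Measure α}
    [∀ i, SigmaFinite (ν i)] {P : α → Prop} (h : ∀ i, ∀ᵐ x ∂ν i, P x) :
    ∀ᵐ x ∂Measure.pi ν, ∀ i, P (x i) :=
  Filter.eventually_all.2 fun i ↦ Measure.tendsto_eval_ae_ae.eventually (h i)

section pi

variable {ι : Type*} [Fintype ι] [DecidableEq ι] (ν : ι → Measure ℝ)

lemma integrable_pi_prod_eval [∀ i, IsFiniteMeasure (ν i)]
    (hint : ∀ i, Integrable (fun t ↦ t) (ν i)) (s : Finset ι) :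
    Integrable (fun x ↦ ∏ i ∈ s, x i) (Measure.pi ν) := by
  have h := Integrable.fintype_prod (μ := ν) (f := fun i (t : ℝ) ↦ if i ∈ s then t else 1)
    fun i ↦ by split_ifs; exacts [hint i, integrable_const 1]
  simpa only [prod_ite_mem, univ_inter] using h

lemma integral_pi_prod_eval [∀ i, IsProbabilityMeasure (ν i)] (s : Finset ι) :
    ∫ x, ∏ i ∈ s, x i ∂Measure.pi ν = ∏ i ∈ s, ∫ t, t ∂ν i := by
  have h := integral_fintype_prod_eq_prod (μ := ν) fun i (t : ℝ) ↦ if i ∈ s then t else 1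
  have hfactor (i : ι) :
      ∫ t, (if i ∈ s then t else 1) ∂ν i = if i ∈ s then ∫ t, t ∂ν i else 1 := by
    split_ifs <;> simp
  simpa only [hfactor, prod_ite_mem, univ_inter] using h

end pi

lemma integral_pow_orderStat_le_esymm {n : ℕ} (ν : Fin n → Measure ℝ)
    [∀ i, IsProbabilityMeasure (ν i)] (hnonneg : ∀ i, ∀ᵐ t ∂ν i, 0 ≤ t)
    (hint : ∀ i, Integrable (fun t ↦ t) (ν i)) (k : Fin n) :
    ∫ x, orderStat (fun i (f : Fin n → ℝ) ↦ f i) k x ^ (n - k) ∂Measure.pi ν ≤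
      ∑ s ∈ univ.powersetCard (n - k), ∏ i ∈ s, ∫ t, t ∂ν i := by
  have hx : ∀ᵐ x ∂Measure.pi ν, ∀ i, 0 ≤ x i := ae_pi_forall hnonneg
  have hsum := integrable_finsetSum (univ.powersetCard (n - k))
    fun s _ ↦ integrable_pi_prod_eval ν hint s
  calc ∫ x, orderStat (fun i (f : Fin n → ℝ) ↦ f i) k x ^ (n - k) ∂Measure.pi ν
      ≤ ∫ x, ∑ s ∈ univ.powersetCard (n - k), ∏ i ∈ s, x i ∂Measure.pi ν :=
        integral_mono_of_nonneg (hx.mono fun x hx ↦ pow_nonneg (hx _) _) hsum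
          (hx.mono fun x hx ↦ pow_sort_le_esymm x hx k)
    _ = ∑ s ∈ univ.powersetCard (n - k), ∏ i ∈ s, ∫ t, t ∂ν i := by
        rw [integral_finsetSum _ fun s _ ↦ integrable_pi_prod_eval ν hint s]
        simp_rw [integral_pi_prod_eval]

noncomputable def twoPointWithMean (m M : ℝ) : Measure ℝ :=
  ENNReal.ofReal (1 - m / M) • Measure.dirac 0 + ENNReal.ofReal (m / M) • Measure.dirac M

section twoPointWithMean

variable {m M : ℝ}

instance : IsFiniteMeasure (twoPointWithMean m M) :=
  have := (Measure.dirac (0 : ℝ)).smul_finite (ENNReal.ofReal_ne_top (r := 1 - m / M))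
  have := (Measure.dirac M).smul_finite (ENNReal.ofReal_ne_top (r := m / M))
  inferInstanceAs (IsFiniteMeasure (_ + _))

lemma ae_twoPointWithMean : ∀ᵐ x ∂twoPointWithMean m M, x = 0 ∨ x = M := by
  rw [ae_iff]
  simp [twoPointWithMean]

lemma isProbabilityMeasure_twoPointWithMean (hm : 0 ≤ m) (hmM : m ≤ M) :
    IsProbabilityMeasure (twoPointWithMean m M) := by
  constructor
  have hM : 0 ≤ M := hm.trans hmM
  simp [twoPointWithMean, ← ENNReal.ofReal_add (sub_nonneg.2 (div_le_one_of_le₀ hmM hM))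
    (div_nonneg hm hM)]

lemma ae_nonneg_twoPointWithMean (hm : 0 ≤ m) (hmM : m ≤ M) :
    ∀ᵐ x ∂twoPointWithMean m M, 0 ≤ x :=
  ae_twoPointWithMean.mono fun _ hx ↦ hx.elim (·.ge) fun h ↦ h ▸ hm.trans hmM

lemma integral_twoPointWithMean (hm : 0 ≤ m) (hmM : m ≤ M) (g : ℝ → ℝ) :
    ∫ x, g x ∂twoPointWithMean m M = (1 - m / M) * g 0 + m / M * g M := by
  rw [twoPointWithMean, integral_add_measure
    ((integrable_dirac (by simp)).smul_measure (by simp))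
    ((integrable_dirac (by simp)).smul_measure (by simp))]
  have hM : 0 ≤ M := hm.trans hmM
  simp [ENNReal.toReal_ofReal, div_nonneg hm hM, div_le_one_of_le₀ hmM hM]

lemma integral_id_twoPointWithMean (hm : 0 ≤ m) (hmM : m ≤ M) :
    ∫ x, x ∂twoPointWithMean m M = m := by
  rw [integral_twoPointWithMean hm hmM]
  simpa using div_mul_cancel_of_imp fun h ↦ le_antisymm (h ▸ hmM) hm

end twoPointWithMean

/-- For `x ∈ {0, M}ⁿ` this is the indicator of `{i | x i = M} = T`; for `x = μ` it is the
probability of that event when the coordinates are independent with laws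
`twoPointWithMean (μ i) M`. -/
noncomputable def bernoulliWeight {ι : Type*} [Fintype ι] [DecidableEq ι] (M : ℝ)
    (T : Finset ι) (x : ι → ℝ) : ℝ :=
  ∏ i, if i ∈ T then x i / M else 1 - x i / M

section bernoulliWeight

variable {ι : Type*} [Fintype ι] [DecidableEq ι] {M : ℝ}

lemma bernoulliWeight_eq_ite {x : ι → ℝ} (hM : 0 < M) (hx : ∀ i, x i = 0 ∨ x i = M)
    (T : Finset ι) :
    bernoulliWeight M T x = if T = ({i | M ≤ x i} : Finset ι) then 1 else 0 := by
  have hfactor (i : ι) : (if i ∈ T then x i / M else 1 - x i / M) =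
      if (i ∈ T ↔ M ≤ x i) then 1 else 0 := by
    rcases hx i with h | h <;> by_cases hi : i ∈ T <;> simp [h, hi, hM, hM.ne']
  rw [bernoulliWeight, prod_congr rfl fun i _ ↦ hfactor i, prod_boole]
  simp [Finset.ext_iff]

lemma pow_mul_prod_le_pow_mul_bernoulliWeight {μ : ι → ℝ} (hμ : ∀ i, 0 ≤ μ i) {c : ℝ}
    (hμc : ∀ i, μ i ≤ c) (hcM : c ≤ M) (hM : 0 < M) (T : Finset ι) :
    (1 - c / M) ^ #Tᶜ * ∏ i ∈ T, μ i ≤ M ^ #T * bernoulliWeight M T μ := by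
  have hsplit : bernoulliWeight M T μ = (∏ i ∈ T, μ i / M) * ∏ i ∈ Tᶜ, (1 - μ i / M) := by
    rw [bernoulliWeight, prod_ite, filter_mem_eq_inter, univ_inter, compl_eq_univ_sdiff,
      filter_notMem_eq_sdiff]
  have hT : M ^ #T * ∏ i ∈ T, μ i / M = ∏ i ∈ T, μ i := by
    rw [← prod_const, ← prod_mul_distrib]
    exact prod_congr rfl fun i _ ↦ mul_div_cancel₀ (μ i) hM.ne'
  have hTc : (1 - c / M) ^ #Tᶜ ≤ ∏ i ∈ Tᶜ, (1 - μ i / M) := by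
    rw [← prod_const]
    refine prod_le_prod (fun _ _ ↦ sub_nonneg.2 ((div_le_one hM).2 hcM)) fun i _ ↦ ?_
    gcongr
    exact hμc i
  rw [hsplit, ← mul_assoc, hT, mul_comm]
  exact mul_le_mul_of_nonneg_left hTc (prod_nonneg fun i _ ↦ hμ i)

end bernoulliWeight

lemma pow_mul_sum_bernoulliWeight_le_pow_sort {n : ℕ} {x : Fin n → ℝ} {M : ℝ} (hM : 0 < M)
    (hx : ∀ i, x i = 0 ∨ x i = M) (k : Fin n) :
    M ^ (n - k) * ∑ T ∈ univ.powersetCard (n - k), bernoulliWeight M T x ≤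
      x (Tuple.sort x k) ^ (n - k) := by
  rw [sum_congr rfl fun T _ ↦ bernoulliWeight_eq_ite hM hx T, sum_ite_eq']
  split_ifs with hcard
  · rw [mul_one]
    exact pow_le_pow_left₀ hM.le (le_sort_of_card_le x k (mem_powersetCard.mp hcard).2.ge) _
  · rw [mul_zero]
    exact pow_nonneg ((hx _).elim (·.ge) fun h ↦ h ▸ hM.le) _

lemma integral_bernoulliWeight_pi_twoPointWithMean {ι : Type*} [Fintype ι] [DecidableEq ι]
    {μ : ι → ℝ} {M : ℝ} (hμ : ∀ i, 0 ≤ μ i) (hμM : ∀ i, μ i ≤ M) (T : Finset ι) :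
    ∫ x, bernoulliWeight M T x ∂Measure.pi (fun i ↦ twoPointWithMean (μ i) M) =
      bernoulliWeight M T μ := by
  unfold bernoulliWeight
  rw [integral_fintype_prod_eq_prod (fun i (t : ℝ) ↦ if i ∈ T then t / M else 1 - t / M)]
  refine prod_congr rfl fun i _ ↦ ?_
  rw [integral_twoPointWithMean (hμ i) (hμM i)]
  rcases eq_or_ne M 0 with rfl | hM
  · simp
  · split_ifs <;> field_simp <;> ring

lemma pow_mul_esymm_le_integral_pow_orderStat {n : ℕ} {μ : Fin n → ℝ} (hμ : ∀ i, 0 ≤ μ i)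
    {c M : ℝ} (hμc : ∀ i, μ i ≤ c) (hcM : c ≤ M) (hM : 0 < M) (k : Fin n) :
    (1 - c / M) ^ (k : ℕ) * ∑ s ∈ univ.powersetCard (n - k), ∏ i ∈ s, μ i ≤
      ∫ x, orderStat (fun i (f : Fin n → ℝ) ↦ f i) k x ^ (n - k)
        ∂Measure.pi (fun i ↦ twoPointWithMean (μ i) M) := by
  have hsupp : ∀ᵐ x ∂Measure.pi (fun i ↦ twoPointWithMean (μ i) M), ∀ i, x i = 0 ∨ x i = M :=
    ae_pi_forall fun i ↦ ae_twoPointWithMean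
  have hint := integrable_of_ae_mem_finite (Set.Finite.pi fun _ ↦ Set.toFinite {0, M})
    (hsupp.mono fun x hx i _ ↦ hx i)
  have hcard (T : Finset (Fin n)) (hT : T ∈ univ.powersetCard (n - k)) :
      #T = n - k ∧ #Tᶜ = k := by
    have hT := (mem_powersetCard.1 hT).2
    refine ⟨hT, ?_⟩
    rw [card_compl, hT, Fintype.card_fin]
    have := k.isLt
    omega
  calc (1 - c / M) ^ (k : ℕ) * ∑ s ∈ univ.powersetCard (n - k), ∏ i ∈ s, μ i
      ≤ ∑ T ∈ univ.powersetCard (n - k), M ^ (n - k) * bernoulliWeight M T μ := by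
        rw [mul_sum]
        refine sum_le_sum fun T hT ↦ ?_
        obtain ⟨hT, hTc⟩ := hcard T hT
        rw [← hT, ← hTc]
        exact pow_mul_prod_le_pow_mul_bernoulliWeight hμ hμc hcM hM T
    _ = ∫ x, M ^ (n - k) * ∑ T ∈ univ.powersetCard (n - k), bernoulliWeight M T x
          ∂Measure.pi (fun i ↦ twoPointWithMean (μ i) M) := by
        rw [integral_const_mul, integral_finsetSum _ fun _ _ ↦ hint _, mul_sum]
        simp_rw [integral_bernoulliWeight_pi_twoPointWithMean hμ fun i ↦ (hμc i).trans hcM]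
    _ ≤ _ := integral_mono_ae (hint _) (hint _)
        (hsupp.mono fun x hx ↦ pow_mul_sum_bernoulliWeight_le_pow_sort hM hx k)

lemma tendsto_one_sub_div_pow_mul_atTop (c e : ℝ) (k : ℕ) :
    Filter.Tendsto (fun M : ℝ ↦ (1 - c / M) ^ k * e) Filter.atTop (nhds e) := by
  simpa using (((tendsto_const_nhds (x := (1 : ℝ))).sub
    ((tendsto_const_nhds (x := c)).div_atTop Filter.tendsto_id)).pow k).mul_const e

theorem sSup_moment_orderStat_eq_esymm_general
    {n : ℕ} (μ : Fin n → ℝ) (hpos : ∀ i, 0 < μ i)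
    (k : Fin n) :
    sSup {y : ℝ | ∃ ν : Fin n → Measure ℝ,
        (∀ i, IsProbabilityMeasure (ν i)) ∧
        (∀ i, ∀ᵐ x ∂(ν i), 0 ≤ x) ∧
        (∀ i, ∫ x, x ∂(ν i) = μ i) ∧
        y = ∫ f, (orderStat (fun i (f : Fin n → ℝ) => f i) k f) ^ (n - (k : ℕ))
              ∂(Measure.pi ν)} =
      ∑ s ∈ Finset.univ.powersetCard (n - (k : ℕ)), ∏ i ∈ s, μ i ∧
    ∀ M : ℝ, (∀ i, μ i ≤ M) →
      ((1 - (⨆ i, μ i) / M) ^ ((k : ℕ)) *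
          ∑ s ∈ Finset.univ.powersetCard (n - (k : ℕ)), ∏ i ∈ s, μ i) ≤
        ∫ f, (orderStat (fun i (f : Fin n → ℝ) => f i) k f) ^ (n - (k : ℕ))
          ∂(Measure.pi (fun i =>
            ENNReal.ofReal (1 - μ i / M) • Measure.dirac (0 : ℝ) +
              ENNReal.ofReal (μ i / M) • Measure.dirac M)) := by
  have : Nonempty (Fin n) := ⟨k⟩
  set c := ⨆ i, μ i
  set e := ∑ s ∈ univ.powersetCard (n - k), ∏ i ∈ s, μ i
  have hμc : ∀ i, μ i ≤ c := le_ciSup (Finite.bddAbove_range μ)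
  have hμ (i : Fin n) : 0 ≤ μ i := (hpos i).le
  have hlower (M : ℝ) (hM : ∀ i, μ i ≤ M) := pow_mul_esymm_le_integral_pow_orderStat hμ hμc
    (ciSup_le hM) ((hpos k).trans_le (hM k)) k
  set S := {y : ℝ | ∃ ν : Fin n → Measure ℝ, (∀ i, IsProbabilityMeasure (ν i)) ∧
    (∀ i, ∀ᵐ x ∂(ν i), 0 ≤ x) ∧ (∀ i, ∫ x, x ∂(ν i) = μ i) ∧
    y = ∫ f, (orderStat (fun i (f : Fin n → ℝ) => f i) k f) ^ (n - (k : ℕ)) ∂(Measure.pi ν)}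
  have hmem (M : ℝ) (hM : c ≤ M) :
      (∫ f, orderStat (fun i (f : Fin n → ℝ) => f i) k f ^ (n - k)
        ∂Measure.pi fun i ↦ twoPointWithMean (μ i) M) ∈ S :=
    have hμM (i : Fin n) : μ i ≤ M := (hμc i).trans hM
    ⟨_, fun i ↦ isProbabilityMeasure_twoPointWithMean (hμ i) (hμM i),
      fun i ↦ ae_nonneg_twoPointWithMean (hμ i) (hμM i),
      fun i ↦ integral_id_twoPointWithMean (hμ i) (hμM i), rfl⟩
  have hupper : e ∈ upperBounds S := by
    rintro y ⟨ν, hprob, hnonneg, hmean, rfl⟩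
    have hint (i : Fin n) : Integrable (fun t ↦ t) (ν i) :=
      .of_integral_ne_zero ((hmean i).trans_ne (hpos i).ne')
    simpa only [hmean] using integral_pow_orderStat_le_esymm ν hnonneg hint k
  refine ⟨IsLUB.csSup_eq ⟨hupper, fun b hb ↦ ?_⟩ ⟨_, hmem c le_rfl⟩, hlower⟩
  refine le_of_tendsto (tendsto_one_sub_div_pow_mul_atTop c _ k) ?_
  filter_upwards [Filter.eventually_ge_atTop c] with M hM
  exact (hlower M fun i ↦ (hμc i).trans hM).trans (hb (hmem M hM))

theorem sSup_moment_orderStat_eq_esymm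
    {n : ℕ} (μ : Fin n → ℝ) (hpos : ∀ i, 0 < μ i)
    (k : Fin n) (hk : 1 ≤ (k : ℕ)) :
    sSup {y : ℝ | ∃ ν : Fin n → Measure ℝ,
        (∀ i, IsProbabilityMeasure (ν i)) ∧
        (∀ i, ∀ᵐ x ∂(ν i), 0 ≤ x) ∧
        (∀ i, ∫ x, x ∂(ν i) = μ i) ∧
        y = ∫ f, (orderStat (fun i (f : Fin n → ℝ) => f i) k f) ^ (n - (k : ℕ))
              ∂(Measure.pi ν)} =
      ∑ s ∈ Finset.univ.powersetCard (n - (k : ℕ)), ∏ i ∈ s, μ i ∧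
    ∀ M : ℝ, (∀ i, μ i ≤ M) →
      ((1 - (⨆ i, μ i) / M) ^ ((k : ℕ)) *
          ∑ s ∈ Finset.univ.powersetCard (n - (k : ℕ)), ∏ i ∈ s, μ i) ≤
        ∫ f, (orderStat (fun i (f : Fin n → ℝ) => f i) k f) ^ (n - (k : ℕ))
          ∂(Measure.pi (fun i =>
            ENNReal.ofReal (1 - μ i / M) • Measure.dirac (0 : ℝ) +
              ENNReal.ofReal (μ i / M) • Measure.dirac M)) :=
  sSup_moment_orderStat_eq_esymm_general μ hpos k
end

section
/- If X_1,...,X_n are iid nonnegative random variables with common mean μ > 0, then E[(X_{k:n})^{n+1-k}] ≤ C(n, k−1) μ^{n+1-k} for each k ∈ {1,...,n}, where C(n, k−1) is the binomial coefficient. -/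
open MeasureTheory ProbabilityTheory

/-! In sorted order, position `k` and the `n - k - 1` positions above it carry values
`≥ X_(k)`, so for nonnegative values `X_(k) ^ (n - k)` is bounded by one product of `n - k`
distinct `X i`, hence by the elementary symmetric sum `e_(n-k)(X)`. By independence every such
product has expectation `μ ^ (n - k)`, and `e_(n-k)` has `n.choose (n - k) = n.choose k` terms. -/

open Finset

lemma pow_sort_le_prod_Ici {n : ℕ} (f : Fin n → ℝ) (hf : ∀ i, 0 ≤ f i) (k : Fin n) :
    f (Tuple.sort f k) ^ (n - k) ≤ ∏ j ∈ Ici k, f (Tuple.sort f j) := by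
  rw [← Fin.card_Ici k, ← prod_const]
  exact prod_le_prod (fun _ _ ↦ hf _) fun j hj ↦ Tuple.monotone_sort f (mem_Ici.mp hj)

lemma pow_sort_le_sum_prod_powersetCard {n : ℕ} (f : Fin n → ℝ) (hf : ∀ i, 0 ≤ f i)
    (k : Fin n) :
    f (Tuple.sort f k) ^ (n - k) ≤ ∑ S ∈ powersetCard (n - k) univ, ∏ i ∈ S, f i := by
  set σ := Tuple.sort f
  have hmem : (Ici k).map σ.toEmbedding ∈ powersetCard (n - k) univ := by
    simp [mem_powersetCard, Fin.card_Ici]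
  calc f (σ k) ^ (n - k) ≤ ∏ j ∈ Ici k, f (σ j) := pow_sort_le_prod_Ici f hf k
    _ = ∏ i ∈ (Ici k).map σ.toEmbedding, f i := by rw [prod_map]; rfl
    _ ≤ _ := single_le_sum (f := fun S ↦ ∏ i ∈ S, f i)
        (fun S _ ↦ prod_nonneg fun i _ ↦ hf i) hmem

namespace ProbabilityTheory

variable {Ω ι : Type*} [MeasurableSpace Ω] {P : Measure Ω} {X : ι → Ω → ℝ}

lemma iIndepFun.integrable_finset_prod_s4 (hX : iIndepFun X P) (hmeas : ∀ i, Measurable (X i))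
    (hint : ∀ i, Integrable (X i) P) (s : Finset ι) :
    Integrable (fun ω ↦ ∏ i ∈ s, X i ω) P := by
  classical
  induction s using Finset.induction with
  | empty => have := hX.isProbabilityMeasure; simp
  | @insert i s hi ih =>
    simpa only [prod_insert hi, prod_fn, Pi.mul_def] using
      (hX.indepFun_finsetProd_of_notMem hmeas hi).symm.integrable_mul (hint i)
        (by simpa only [prod_fn] using ih)

lemma iIndepFun.integral_finset_prod_eq_prod_integral (hX : iIndepFun X P)
    (hmeas : ∀ i, AEStronglyMeasurable (X i) P) (s : Finset ι) :
    ∫ ω, ∏ i ∈ s, X i ω ∂P = ∏ i ∈ s, ∫ ω, X i ω ∂P := by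
  simpa only [← prod_coe_sort s] using
    (hX.precomp Subtype.val_injective).integral_fun_prod_eq_prod_integral
      (X := fun i : s ↦ X i) fun i ↦ hmeas i

lemma iIndepFun.integral_sum_prod_powersetCard [Fintype ι] (hX : iIndepFun X P)
    (hmeas : ∀ i, Measurable (X i)) (hint : ∀ i, Integrable (X i) P) {μ : ℝ}
    (hmean : ∀ i, ∫ ω, X i ω ∂P = μ) (m : ℕ) :
    ∫ ω, ∑ S ∈ powersetCard m univ, ∏ i ∈ S, X i ω ∂P = (Fintype.card ι).choose m * μ ^ m := by
  rw [integral_finsetSum _ fun S _ ↦ hX.integrable_finset_prod_s4 hmeas hint S]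
  rw [sum_congr rfl fun S hS ↦ by
    rw [hX.integral_finset_prod_eq_prod_integral (fun i ↦ (hint i).aestronglyMeasurable),
      prod_congr rfl fun i _ ↦ hmean i, prod_const, (mem_powersetCard.mp hS).2]]
  simp

end ProbabilityTheory

theorem moment_orderStat_le_choose_mul_pow_of_iid_general
    {Ω : Type*} [MeasurableSpace Ω] (P : Measure Ω)
    {n : ℕ} (X : Fin n → Ω → ℝ) (μ : ℝ)
    (hmeas : ∀ i, Measurable (X i))
    (hnonneg : ∀ i ω, 0 ≤ X i ω)
    (hindep : iIndepFun X P)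
    (hint : ∀ i, Integrable (X i) P)
    (hmean : ∀ i, ∫ ω, X i ω ∂P = μ) :
    ∀ k : Fin n,
      ∫ ω, (orderStat X k ω) ^ (n - (k : ℕ)) ∂P ≤
        (n.choose (k : ℕ)) * μ ^ (n - (k : ℕ)) := by
  intro k
  calc ∫ ω, (orderStat X k ω) ^ (n - (k : ℕ)) ∂P
      ≤ ∫ ω, ∑ S ∈ powersetCard (n - k) univ, ∏ i ∈ S, X i ω ∂P :=
        integral_mono_of_nonneg (ae_of_all _ fun ω ↦ pow_nonneg (hnonneg _ ω) _)
          (integrable_finsetSum _ fun S _ ↦ hindep.integrable_finset_prod_s4 hmeas hint S)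
          (ae_of_all _ fun ω ↦ pow_sort_le_sum_prod_powersetCard _ (hnonneg · ω) k)
    _ = n.choose (n - k) * μ ^ (n - k) := by
        rw [hindep.integral_sum_prod_powersetCard hmeas hint hmean, Fintype.card_fin]
    _ = n.choose k * μ ^ (n - k) := by rw [Nat.choose_symm k.isLt.le]

theorem moment_orderStat_le_choose_mul_pow_of_iid
    {Ω : Type*} [MeasurableSpace Ω] (P : Measure Ω) [IsProbabilityMeasure P]
    {n : ℕ} (X : Fin n → Ω → ℝ) (μ : ℝ) (hμ : 0 < μ)
    (hmeas : ∀ i, Measurable (X i))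
    (hnonneg : ∀ i ω, 0 ≤ X i ω)
    (hindep : iIndepFun X P)
    (hident : ∀ i j, IdentDistrib (X i) (X j) P P)
    (hint : ∀ i, Integrable (X i) P)
    (hmean : ∀ i, ∫ ω, X i ω ∂P = μ) :
    ∀ k : Fin n,
      ∫ ω, (orderStat X k ω) ^ (n - (k : ℕ)) ∂P ≤
        (n.choose (k : ℕ)) * μ ^ (n - (k : ℕ)) :=
  moment_orderStat_le_choose_mul_pow_of_iid_general P X μ hmeas hnonneg hindep hint hmean
end

section
/- The function R_1(x) defined by R_1(x) = 1 for x ≤ 1/2 and R_1(x) = 1/((2x)(1 + log(2x))^2) for x ≥ 1/2 is a reliability (survival) function of a nonnegative random variable Y_1 with E[Y_1] = 1, and for α > 0, E[Y_1^α] < ∞ if and only if α ∈ (0,1]. -/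
/-!
Take for the law of `Y₁` the Lebesgue–Stieltjes measure of the continuous distribution function
`1 - R₁`. On `(1/2, ∞)`, `R₁` is the derivative of `-1 / (2 (1 + log 2t))`, so `∫₀^∞ R₁ = 1/2 + 1/2`,
and the layer-cake formula `E[Y₁^α] = α ∫₀^∞ t^(α-1) R₁(t) dt` turns every moment into such an
integral. For `α ≤ 1` the weight `t^(α-1)` is integrable near `0` and at most `1` on `(1, ∞)`. For
`α > 1`, `log t ≤ t^s / s` with `s = (α-1)/2` gives `t^(α-1) R₁(t) ≥ c / t` on `(1, ∞)`, which is
not integrable.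
-/

open MeasureTheory ProbabilityTheory

/-- The reliability function `R₁`. -/
noncomputable def R1 (x : ℝ) : ℝ :=
  if x ≤ 1 / 2 then 1 else 1 / ((2 * x) * (1 + Real.log (2 * x)) ^ 2)

open Set Filter Topology Real

lemma one_le_two_mul_mul_one_add_log_sq {x : ℝ} (hx : 1 / 2 ≤ x) :
    1 ≤ 2 * x * (1 + log (2 * x)) ^ 2 := by
  have h2x : 1 ≤ 2 * x := by linarith
  have hlog : 0 ≤ log (2 * x) := log_nonneg h2x
  nlinarith

lemma R1_of_le {x : ℝ} (hx : x ≤ 1 / 2) : R1 x = 1 := if_pos hx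

lemma R1_of_gt {x : ℝ} (hx : 1 / 2 < x) : R1 x = 1 / (2 * x * (1 + log (2 * x)) ^ 2) :=
  if_neg hx.not_ge

lemma R1_nonneg (x : ℝ) : 0 ≤ R1 x := by
  rcases le_or_gt x (1 / 2) with hx | hx
  · rw [R1_of_le hx]; exact zero_le_one
  · rw [R1_of_gt hx]
    exact one_div_nonneg.2 (zero_le_one.trans (one_le_two_mul_mul_one_add_log_sq hx.le))

lemma R1_antitone : Antitone R1 := by
  intro x y hxy
  rcases le_or_gt y (1 / 2) with hy | hy
  · rw [R1_of_le hy, R1_of_le (hxy.trans hy)]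
  rw [R1_of_gt hy]
  rcases le_or_gt x (1 / 2) with hx | hx
  · rw [R1_of_le hx]
    exact div_le_one_of_le₀ (one_le_two_mul_mul_one_add_log_sq hy.le) (by positivity)
  rw [R1_of_gt hx]
  have hlog : 0 ≤ log (2 * x) := log_nonneg (by linarith)
  have hlog_le : log (2 * x) ≤ log (2 * y) := log_le_log (by linarith) (by linarith)
  gcongr

lemma R1_le_one (x : ℝ) : R1 x ≤ 1 :=
  (R1_antitone (min_le_left x (1 / 2))).trans_eq (R1_of_le (min_le_right x _))

lemma R1_continuous : Continuous R1 := by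
  refine continuous_if_le continuous_id continuous_const continuousOn_const ?_ ?_
  · intro x (hx : 1 / 2 ≤ x)
    have hlog : 0 ≤ log (2 * x) := log_nonneg (by linarith)
    fun_prop (disch := positivity)
  · intro x (hx : x = 1 / 2)
    simp [hx]

lemma tendsto_R1_atTop : Tendsto R1 atTop (𝓝 0) := by
  have h2x : Tendsto (fun x : ℝ => 1 / (2 * x)) atTop (𝓝 0) :=
    tendsto_const_nhds.div_atTop (tendsto_id.const_mul_atTop two_pos)
  refine tendsto_of_tendsto_of_tendsto_of_le_of_le' tendsto_const_nhds h2x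
    (.of_forall R1_nonneg) ?_
  filter_upwards [eventually_gt_atTop (1 / 2 : ℝ)] with x hx
  have hlog : 0 ≤ log (2 * x) := log_nonneg (by linarith)
  rw [R1_of_gt hx]
  exact one_div_le_one_div_of_le (by linarith)
    (le_mul_of_one_le_right (by linarith) (one_le_pow₀ (by linarith)))

noncomputable def cdfR1 : StieltjesFunction ℝ where
  toFun x := 1 - R1 x
  mono' _ _ hxy := sub_le_sub_left (R1_antitone hxy) 1
  right_continuous' _ := (continuous_const.sub R1_continuous).continuousWithinAt

lemma cdfR1_apply (x : ℝ) : cdfR1 x = 1 - R1 x := rfl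

lemma tendsto_cdfR1_atBot : Tendsto cdfR1 atBot (𝓝 0) := by
  refine tendsto_const_nhds.congr' ?_
  filter_upwards [eventually_le_atBot (1 / 2 : ℝ)] with x hx
  rw [cdfR1_apply, R1_of_le hx, sub_self]

lemma tendsto_cdfR1_atTop : Tendsto cdfR1 atTop (𝓝 1) := by
  have h := tendsto_R1_atTop.const_sub 1
  rwa [sub_zero] at h

noncomputable def measureR1 : Measure ℝ := cdfR1.measure

instance : IsProbabilityMeasure measureR1 :=
  cdfR1.isProbabilityMeasure tendsto_cdfR1_atBot tendsto_cdfR1_atTop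

lemma measureR1_Ioi (x : ℝ) : measureR1 (Ioi x) = ENNReal.ofReal (R1 x) := by
  rw [measureR1, cdfR1.measure_Ioi tendsto_cdfR1_atTop, cdfR1_apply, sub_sub_cancel]

lemma ae_nonneg_measureR1 : ∀ᵐ x ∂measureR1, 0 ≤ x := by
  refine ae_iff.2 (measure_mono_null (show {x : ℝ | ¬0 ≤ x} ⊆ Iic 0 from
    fun x hx => (not_le.1 hx).le) ?_)
  rw [measureR1, cdfR1.measure_Iic tendsto_cdfR1_atBot, cdfR1_apply, R1_of_le (by norm_num)]
  simp

lemma lintegral_rpow_measureR1 {α : ℝ} (hα : 0 < α) :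
    ∫⁻ x, ENNReal.ofReal (x ^ α) ∂measureR1 =
      ENNReal.ofReal α * ∫⁻ t in Ioi 0, ENNReal.ofReal (R1 t * t ^ (α - 1)) := by
  rw [lintegral_rpow_eq_lintegral_meas_lt_mul measureR1 ae_nonneg_measureR1 aemeasurable_id hα]
  congr 1
  refine setLIntegral_congr_fun measurableSet_Ioi fun t _ => ?_
  rw [ENNReal.ofReal_mul (R1_nonneg t), ← measureR1_Ioi]
  rfl

lemma hasDerivAt_neg_inv_two_mul_one_add_log {t : ℝ} (ht : 1 / 2 ≤ t) :
    HasDerivAt (fun t => -(2 * (1 + log (2 * t)))⁻¹)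
      (1 / (2 * t * (1 + log (2 * t)) ^ 2)) t := by
  have hlog : 0 ≤ log (2 * t) := log_nonneg (by linarith)
  have h := ((((hasDerivAt_id' t).const_mul 2).log (by positivity)).const_add 1).const_mul 2
  refine (h.inv (by positivity)).neg.congr_deriv ?_
  field_simp

lemma tendsto_neg_inv_two_mul_one_add_log :
    Tendsto (fun t : ℝ => -(2 * (1 + log (2 * t)))⁻¹) atTop (𝓝 0) := by
  have h : Tendsto (fun t : ℝ => 2 * (1 + log (2 * t))) atTop atTop :=
    (tendsto_atTop_add_const_left _ 1
      (tendsto_log_atTop.comp (tendsto_id.const_mul_atTop two_pos))).const_mul_atTop two_pos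
  simpa using h.inv_tendsto_atTop.neg

lemma integrableOn_Ioi_half_R1 : IntegrableOn R1 (Ioi (1 / 2)) :=
  (integrableOn_Ioi_deriv_of_nonneg' (fun _ ht => hasDerivAt_neg_inv_two_mul_one_add_log ht)
    (fun t ht => R1_of_gt ht ▸ R1_nonneg t)
    tendsto_neg_inv_two_mul_one_add_log).congr_fun (fun _ ht => (R1_of_gt ht).symm)
    measurableSet_Ioi

lemma integral_Ioi_half_R1 : ∫ t in Ioi (1 / 2), R1 t = 1 / 2 := by
  rw [setIntegral_congr_fun measurableSet_Ioi fun _ ht => R1_of_gt ht,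
    integral_Ioi_of_hasDerivAt_of_nonneg' (fun _ ht => hasDerivAt_neg_inv_two_mul_one_add_log ht)
      (fun t ht => R1_of_gt ht ▸ R1_nonneg t)
      tendsto_neg_inv_two_mul_one_add_log]
  norm_num

lemma integrableOn_Ioi_zero_R1 : IntegrableOn R1 (Ioi 0) := by
  rw [← Ioc_union_Ioi_eq_Ioi (show (0 : ℝ) ≤ 1 / 2 by norm_num)]
  exact R1_continuous.integrableOn_Ioc.union integrableOn_Ioi_half_R1

lemma integral_Ioi_zero_R1 : ∫ t in Ioi 0, R1 t = 1 := by
  have hIoc : ∫ t in Ioc (0 : ℝ) (1 / 2), R1 t = 1 / 2 := by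
    rw [setIntegral_congr_fun measurableSet_Ioc fun _ ht => R1_of_le ht.2]
    simp
  rw [← Ioc_union_Ioi_eq_Ioi (show (0 : ℝ) ≤ 1 / 2 by norm_num),
    setIntegral_union Ioc_disjoint_Ioi_same measurableSet_Ioi R1_continuous.integrableOn_Ioc
      integrableOn_Ioi_half_R1, hIoc, integral_Ioi_half_R1]
  norm_num

lemma integrableOn_R1_mul_rpow {α : ℝ} (hα₀ : 0 < α) (hα₁ : α ≤ 1) :
    IntegrableOn (fun t => R1 t * t ^ (α - 1)) (Ioi 0) := by
  have hR1_bound : ∀ t, ‖R1 t‖ ≤ 1 := fun t => by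
    rw [Real.norm_of_nonneg (R1_nonneg t)]; exact R1_le_one t
  have hnear : IntegrableOn (fun t => R1 t * t ^ (α - 1)) (Ioc 0 1) :=
    ((intervalIntegrable_iff_integrableOn_Ioc_of_le zero_le_one).1
      (intervalIntegral.intervalIntegrable_rpow' (by linarith))).bdd_mul
      R1_continuous.aestronglyMeasurable (.of_forall hR1_bound)
  have hfar : IntegrableOn (fun t => R1 t * t ^ (α - 1)) (Ioi 1) := by
    refine (integrableOn_Ioi_half_R1.mono_set (Ioi_subset_Ioi (by norm_num))).mul_bdd (c := 1)
      ((measurable_id.pow_const _).aestronglyMeasurable) ?_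
    filter_upwards [ae_restrict_mem measurableSet_Ioi] with t (ht : 1 < t)
    rw [Real.norm_of_nonneg (by positivity)]
    exact rpow_le_one_of_one_le_of_nonpos ht.le (by linarith)
  rw [← Ioc_union_Ioi_eq_Ioi zero_le_one]
  exact hnear.union hfar

lemma one_add_log_two_mul_le_mul_rpow {s t : ℝ} (hs : 0 < s) (ht : 1 ≤ t) :
    1 + log (2 * t) ≤ (2 + 1 / s) * t ^ s := by
  have hts : 1 ≤ t ^ s := one_le_rpow ht hs.le
  have hlog2 : log 2 ≤ 1 := by linarith [log_le_sub_one_of_pos two_pos]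
  have hlogt : log t ≤ t ^ s / s := log_le_rpow_div (by linarith) hs
  rw [log_mul two_ne_zero (by linarith)]
  calc 1 + (log 2 + log t) ≤ 2 * t ^ s + t ^ s / s := by linarith
    _ = (2 + 1 / s) * t ^ s := by ring

lemma inv_le_R1_mul_rpow {α t : ℝ} (hα : 1 < α) (ht : 1 ≤ t) :
    t⁻¹ ≤ 2 * (2 + 2 / (α - 1)) ^ 2 * (R1 t * t ^ (α - 1)) := by
  set C := 2 + 2 / (α - 1)
  have htpos : 0 < t := by linarith
  have hC : 0 < C := by have := div_pos two_pos (sub_pos.2 hα); linarith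
  have hlog : 1 + log (2 * t) ≤ C * t ^ ((α - 1) / 2) := by
    simpa [one_div_div] using one_add_log_two_mul_le_mul_rpow (s := (α - 1) / 2) (by linarith) ht
  have hsq : (1 + log (2 * t)) ^ 2 ≤ C ^ 2 * t ^ (α - 1) := by
    have hlog0 : 0 ≤ log (2 * t) := log_nonneg (by linarith)
    calc (1 + log (2 * t)) ^ 2 ≤ (C * t ^ ((α - 1) / 2)) ^ 2 := by gcongr
      _ = C ^ 2 * t ^ (α - 1) := by
        rw [mul_pow, ← rpow_mul_natCast htpos.le]; congr 2; push_cast; ring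
  have hpow : 0 < t ^ (α - 1) := rpow_pos_of_pos htpos _
  have hden := one_le_two_mul_mul_one_add_log_sq (x := t) (by linarith)
  rw [R1_of_gt (by linarith)]
  calc t⁻¹ = 2 * C ^ 2 * (t ^ (α - 1) / (2 * t * (C ^ 2 * t ^ (α - 1)))) := by field_simp
    _ ≤ 2 * C ^ 2 * (t ^ (α - 1) / (2 * t * (1 + log (2 * t)) ^ 2)) := by gcongr
    _ = 2 * C ^ 2 * (1 / (2 * t * (1 + log (2 * t)) ^ 2) * t ^ (α - 1)) := by ring

lemma not_integrableOn_R1_mul_rpow {α : ℝ} (hα : 1 < α) :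
    ¬ IntegrableOn (fun t => R1 t * t ^ (α - 1)) (Ioi 1) := fun h =>
  not_integrableOn_Ioi_inv ((h.const_mul _).mono' measurable_inv.aestronglyMeasurable
    (by
      filter_upwards [ae_restrict_mem measurableSet_Ioi] with t (ht : 1 < t)
      rw [Real.norm_of_nonneg (by positivity)]
      exact inv_le_R1_mul_rpow hα ht.le))

lemma lintegral_R1_mul_rpow_lt_top_iff {α : ℝ} (hα : 0 < α) :
    ∫⁻ t in Ioi 0, ENNReal.ofReal (R1 t * t ^ (α - 1)) < ⊤ ↔ α ≤ 1 := by
  rw [lt_top_iff_ne_top, lintegral_ofReal_ne_top_iff_integrable (f := fun t => R1 t * t ^ (α - 1))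
    (R1_continuous.measurable.mul (measurable_id.pow_const _)).aestronglyMeasurable
    (ae_restrict_of_forall_mem measurableSet_Ioi fun t (ht : 0 < t) =>
      mul_nonneg (R1_nonneg t) (rpow_nonneg ht.le _))]
  refine ⟨fun h => ?_, integrableOn_R1_mul_rpow hα⟩
  by_contra! hα₁
  exact not_integrableOn_R1_mul_rpow hα₁ (IntegrableOn.mono_set h (Ioi_subset_Ioi zero_le_one))

lemma lintegral_rpow_measureR1_lt_top_iff {α : ℝ} (hα : 0 < α) :
    ∫⁻ x, ENNReal.ofReal (x ^ α) ∂measureR1 < ⊤ ↔ α ≤ 1 := by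
  rw [lintegral_rpow_measureR1 hα, ← lintegral_R1_mul_rpow_lt_top_iff hα]
  exact ⟨fun h => ENNReal.lt_top_of_mul_ne_top_right h.ne (by simpa using hα),
    ENNReal.mul_lt_top ENNReal.ofReal_lt_top⟩

lemma integral_id_measureR1 : ∫ x, x ∂measureR1 = 1 := by
  have h := lintegral_rpow_measureR1 one_pos
  simp only [rpow_one, sub_self, rpow_zero, mul_one, ENNReal.ofReal_one, one_mul] at h
  rw [integral_eq_lintegral_of_nonneg_ae ae_nonneg_measureR1 aestronglyMeasurable_id, h,
    ← ofReal_integral_eq_lintegral_ofReal integrableOn_Ioi_zero_R1 (.of_forall R1_nonneg),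
    integral_Ioi_zero_R1, ENNReal.toReal_ofReal zero_le_one]

theorem R1_is_survival_of_mean_one_rv :
    ∃ ν : Measure ℝ, IsProbabilityMeasure ν ∧
      (∀ᵐ x ∂ν, 0 ≤ x) ∧
      (∀ x : ℝ, (ν (Set.Ioi x)).toReal = R1 x) ∧
      (∫ x, x ∂ν = 1) ∧
      (∀ α : ℝ, 0 < α → ((∫⁻ x, ENNReal.ofReal (x ^ α) ∂ν) < ⊤ ↔ α ≤ 1)) :=
  ⟨measureR1, inferInstance, ae_nonneg_measureR1,
    fun x => by rw [measureR1_Ioi, ENNReal.toReal_ofReal (R1_nonneg x)],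
    integral_id_measureR1, fun _ => lintegral_rpow_measureR1_lt_top_iff⟩
end

section
/- For each μ_1,...,μ_n > 0 there exist independent nonnegative random variables X_1,...,X_n with E[X_i] = μ_i such that for every k ∈ {1,...,n} and every δ > 0, E[(X_{k:n})^{n+1-k+δ}] = ∞; moreover if all μ_i are equal, the X_i can be taken iid. -/
/-!
A discrete analogue of the tail `1 / (2x (1 + log 2x)^2)`: `X` takes the value
`c 2^(j+1) / (j+1)^2` with probability `2^-(j+1)`, so `E X = c ∑ 1/(j+1)^2 = c π²/6` is finite.
With `m = n - k`, the `m` variables of index `≥ k` all exceed the atom `t_j` of the smallest scale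
with probability at least `2^-(j+1)m`, and then so does the 0-indexed order statistic `X_{k:n}`.
Hence `E[X_{k:n}^(m+δ)] ≥ t_j^(m+δ) 2^-(j+1)m = c^(m+δ) 2^((j+1)δ) / (j+1)^(2(m+δ))`,
which is unbounded in `j`.
-/

open MeasureTheory ProbabilityTheory

open Filter Set Real
open scoped ENNReal Topology

theorem le_orderStat_of_forall_le {Ω : Type*} {n : ℕ} {X : Fin n → Ω → ℝ} {k : Fin n} {ω : Ω}
    {t : ℝ} (h : ∀ i, k ≤ i → t ≤ X i ω) : t ≤ orderStat X k ω := by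
  by_contra! hlt
  set σ := Tuple.sort fun i => X i ω
  have hmaps : ∀ i ∈ Finset.Iic k, σ i ∈ Finset.Iio k := fun i hi => by
    have : X (σ i) ω < t :=
      (Tuple.monotone_sort (fun i => X i ω) (Finset.mem_Iic.1 hi)).trans_lt hlt
    exact Finset.mem_Iio.2 (lt_of_not_ge fun hk => this.not_ge (h _ hk))
  have := Finset.card_le_card_of_injOn σ hmaps σ.injective.injOn
  rw [Fin.card_Iic, Fin.card_Iio] at this
  omega

theorem ofReal_rpow_mul_prod_le_lintegral_orderStat {n : ℕ} {ν : Fin n → Measure ℝ}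
    [∀ i, IsProbabilityMeasure (ν i)] (k : Fin n) {t p : ℝ} (ht : 0 ≤ t) (hp : 0 ≤ p) :
    ENNReal.ofReal (t ^ p) * ∏ i ∈ Finset.Ici k, ν i (Ici t) ≤
      ∫⁻ f, ENNReal.ofReal (orderStat (fun i (f : Fin n → ℝ) => f i) k f ^ p) ∂Measure.pi ν := by
  classical
  set A : Fin n → Set ℝ := fun i => if k ≤ i then Ici t else univ
  have hA : MeasurableSet (univ.pi A) :=
    MeasurableSet.univ_pi fun i => by dsimp only [A]; split_ifs <;> measurability
  have hprod : ∏ i ∈ Finset.Ici k, ν i (Ici t) = Measure.pi ν (univ.pi A) := by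
    rw [Measure.pi_pi, ← Finset.filter_le_eq_Ici, Finset.prod_filter]
    refine Finset.prod_congr rfl fun i _ => ?_
    split_ifs with hi <;> simp [A, hi]
  rw [hprod, ← lintegral_indicator_const hA]
  refine lintegral_mono (Set.indicator_le fun f hf => ENNReal.ofReal_le_ofReal ?_)
  refine Real.rpow_le_rpow ht (le_orderStat_of_forall_le fun i hi => ?_) hp
  simpa [A, hi] using hf i (mem_univ i)

theorem lintegral_orderStat_rpow_eq_top {n : ℕ} {ν : Fin n → Measure ℝ}
    [∀ i, IsProbabilityMeasure (ν i)] (k : Fin n) {p : ℝ} (hp : 0 ≤ p) {ι : Type*}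
    (t : ι → ℝ) (q : ι → ℝ≥0∞) (ht : ∀ j, 0 ≤ t j) (hq : ∀ i j, q j ≤ ν i (Ici (t j)))
    (hunb : ⨆ j, ENNReal.ofReal (t j ^ p) * q j ^ (n - (k : ℕ)) = ⊤) :
    ∫⁻ f, ENNReal.ofReal (orderStat (fun i (f : Fin n → ℝ) => f i) k f ^ p)
      ∂Measure.pi ν = ⊤ := by
  refine eq_top_iff.2 (hunb ▸ iSup_le fun j => ?_)
  calc ENNReal.ofReal (t j ^ p) * q j ^ (n - (k : ℕ))
      = ENNReal.ofReal (t j ^ p) * ∏ _ ∈ Finset.Ici k, q j := by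
        rw [Finset.prod_const, Fin.card_Ici]
    _ ≤ ENNReal.ofReal (t j ^ p) * ∏ i ∈ Finset.Ici k, ν i (Ici (t j)) := by
        gcongr with i; exact hq i j
    _ ≤ _ := ofReal_rpow_mul_prod_le_lintegral_orderStat k (ht j) hp

noncomputable def heavyTailAtom (c : ℝ) (j : ℕ) : ℝ := c * 2 ^ (j + 1) / ((j : ℝ) + 1) ^ 2

noncomputable def heavyTailMeasure (c : ℝ) : Measure ℝ :=
  Measure.sum fun j : ℕ => (2⁻¹ : ℝ≥0∞) ^ (j + 1) • Measure.dirac (heavyTailAtom c j)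

theorem heavyTailAtom_nonneg {c : ℝ} (hc : 0 ≤ c) (j : ℕ) : 0 ≤ heavyTailAtom c j := by
  unfold heavyTailAtom; positivity

theorem heavyTailAtom_mono (j : ℕ) : Monotone fun c => heavyTailAtom c j := fun c c' h => by
  simp only [heavyTailAtom]; gcongr

theorem lintegral_heavyTailMeasure (c : ℝ) (f : ℝ → ℝ≥0∞) :
    ∫⁻ x, f x ∂heavyTailMeasure c = ∑' j : ℕ, 2⁻¹ ^ (j + 1) * f (heavyTailAtom c j) := by
  simp [heavyTailMeasure, lintegral_sum_measure]

instance (c : ℝ) : IsProbabilityMeasure (heavyTailMeasure c) := by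
  constructor
  simp [heavyTailMeasure, ENNReal.tsum_geometric_add_one, ENNReal.one_sub_inv_two,
    ENNReal.inv_mul_cancel]

theorem ae_nonneg_heavyTailMeasure {c : ℝ} (hc : 0 ≤ c) : ∀ᵐ x ∂heavyTailMeasure c, 0 ≤ x := by
  rw [heavyTailMeasure, Measure.ae_sum_iff' measurableSet_Ici]
  exact fun j => Measure.ae_smul_measure
    ((ae_dirac_iff measurableSet_Ici).2 (heavyTailAtom_nonneg hc j)) _

theorem hasSum_one_div_nat_add_one_sq :
    HasSum (fun j : ℕ => 1 / ((j : ℝ) + 1) ^ 2) (π ^ 2 / 6) := by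
  simpa using (hasSum_nat_add_iff' 1).2 hasSum_zeta_two

theorem integral_heavyTailMeasure {c : ℝ} (hc : 0 ≤ c) :
    ∫ x, x ∂heavyTailMeasure c = c * (π ^ 2 / 6) := by
  have hterm : ∀ j : ℕ, (2⁻¹ : ℝ≥0∞) ^ (j + 1) * ENNReal.ofReal (heavyTailAtom c j) =
      ENNReal.ofReal (c * (1 / ((j : ℝ) + 1) ^ 2)) := fun j => by
    rw [← ENNReal.ofReal_ofNat 2, ← ENNReal.ofReal_inv_of_pos two_pos,
      ← ENNReal.ofReal_pow (by norm_num), ← ENNReal.ofReal_mul (by positivity), heavyTailAtom]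
    congr 1
    field_simp
    rw [mul_right_comm, ← mul_pow]
    norm_num
  rw [integral_eq_lintegral_of_nonneg_ae (ae_nonneg_heavyTailMeasure hc)
      measurable_id.aestronglyMeasurable, lintegral_heavyTailMeasure, tsum_congr hterm,
    ← ENNReal.ofReal_tsum_of_nonneg (fun j => by positivity)
      (hasSum_one_div_nat_add_one_sq.summable.mul_left c), ENNReal.toReal_ofReal (by positivity),
    tsum_mul_left, hasSum_one_div_nat_add_one_sq.tsum_eq]

theorem pow_le_heavyTailMeasure_Ici {c c' : ℝ} (h : c ≤ c') (j : ℕ) :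
    2⁻¹ ^ (j + 1) ≤ heavyTailMeasure c' (Ici (heavyTailAtom c j)) :=
  calc (2⁻¹ : ℝ≥0∞) ^ (j + 1)
      = ((2⁻¹ : ℝ≥0∞) ^ (j + 1) • Measure.dirac (heavyTailAtom c' j))
          (Ici (heavyTailAtom c j)) := by simp [heavyTailAtom_mono j h]
    _ ≤ heavyTailMeasure c' (Ici (heavyTailAtom c j)) := Measure.le_sum _ j _

theorem heavyTailAtom_rpow_mul_pow {c : ℝ} (hc : 0 ≤ c) (m : ℕ) (δ : ℝ) (j : ℕ) :
    heavyTailAtom c j ^ ((m : ℝ) + δ) * ((2 : ℝ)⁻¹ ^ (j + 1)) ^ m =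
      c ^ ((m : ℝ) + δ) *
        (exp (δ * log 2 * ((j : ℝ) + 1)) / ((j : ℝ) + 1) ^ (2 * ((m : ℝ) + δ))) := by
  set N : ℝ := (j : ℝ) + 1
  have hN : 0 < N := by positivity
  have h2 : (2 : ℝ) ^ (j + 1) = exp (log 2 * N) := by
    rw [← Real.rpow_natCast, Real.rpow_def_of_pos two_pos]; push_cast; rfl
  have hexp :
      exp (log 2 * N * ((m : ℝ) + δ)) * exp (m * -(log 2 * N)) = exp (δ * log 2 * N) := by
    rw [← Real.exp_add]; ring_nf
  rw [heavyTailAtom, h2, inv_pow, h2, Real.div_rpow (by positivity) (by positivity),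
    Real.mul_rpow hc (by positivity), ← Real.exp_mul, ← Real.rpow_natCast_mul hN.le,
    ← Real.exp_neg, ← Real.exp_nat_mul, ← hexp]
  push_cast
  ring

theorem tendsto_ofReal_heavyTailAtom_rpow_mul_pow {c δ : ℝ} (hc : 0 < c) (hδ : 0 < δ)
    (m : ℕ) :
    Tendsto (fun j => ENNReal.ofReal (heavyTailAtom c j ^ ((m : ℝ) + δ)) * (2⁻¹ ^ (j + 1)) ^ m)
      atTop (𝓝 ⊤) := by
  have hN : Tendsto (fun j : ℕ => (j : ℝ) + 1) atTop atTop :=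
    tendsto_atTop_add_const_right _ 1 tendsto_natCast_atTop_atTop
  have hreal := ((tendsto_exp_mul_div_rpow_atTop (2 * ((m : ℝ) + δ)) (δ * log 2)
    (by positivity)).comp hN).const_mul_atTop (Real.rpow_pos_of_pos hc ((m : ℝ) + δ))
  refine (ENNReal.tendsto_ofReal_atTop.comp hreal).congr fun j => ?_
  simp only [Function.comp_apply]
  rw [← heavyTailAtom_rpow_mul_pow hc.le,
    ENNReal.ofReal_mul (Real.rpow_nonneg (heavyTailAtom_nonneg hc.le j) _),
    ENNReal.ofReal_pow (by positivity), ENNReal.ofReal_pow (by positivity),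
    ENNReal.ofReal_inv_of_pos two_pos, ENNReal.ofReal_ofNat]

theorem exists_indep_with_infinite_higher_moments
    {n : ℕ} (μ : Fin n → ℝ) (hpos : ∀ i, 0 < μ i) :
    ∃ ν : Fin n → Measure ℝ,
      (∀ i, IsProbabilityMeasure (ν i)) ∧
      (∀ i, ∀ᵐ x ∂(ν i), 0 ≤ x) ∧
      (∀ i, ∫ x, x ∂(ν i) = μ i) ∧
      (∀ k : Fin n, ∀ δ : ℝ, 0 < δ →
        ∫⁻ f, ENNReal.ofReal
            ((orderStat (fun i (f : Fin n → ℝ) => f i) k f) ^ ((n - (k : ℕ) : ℕ) + δ))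
          ∂(Measure.pi ν) = ⊤) ∧
      ((∀ i j, μ i = μ j) → ∀ i j, ν i = ν j) := by
  have hc : ∀ i, 0 < 6 * μ i / π ^ 2 := fun i => by have := hpos i; positivity
  refine ⟨fun i => heavyTailMeasure (6 * μ i / π ^ 2), fun i => inferInstance,
    fun i => ae_nonneg_heavyTailMeasure (hc i).le, fun i => ?_, fun k δ hδ => ?_,
    fun h i j => by simp only [h i j]⟩
  · rw [integral_heavyTailMeasure (hc i).le]
    field_simp
  · have : Nonempty (Fin n) := ⟨k⟩
    obtain ⟨i₀, hi₀⟩ := Finite.exists_min μ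
    refine lintegral_orderStat_rpow_eq_top k (by positivity) (heavyTailAtom (6 * μ i₀ / π ^ 2))
      (fun j => 2⁻¹ ^ (j + 1)) (heavyTailAtom_nonneg (hc i₀).le)
      (fun i j => pow_le_heavyTailMeasure_Ici (by gcongr; exact hi₀ i) j) ?_
    exact eq_top_iff.2 (le_of_tendsto'
      (tendsto_ofReal_heavyTailAtom_rpow_mul_pow (hc i₀) hδ (n - (k : ℕ))) (le_iSup _))
end

section
/- Let α > 1 and let g : (0,1) → [0,∞) be nondecreasing with ∫_0^1 g(t) dt < ∞. Then α ∫_0^1 (1−t)^{α−1} g(t)^α dt ≤ (∫_0^1 g(t) dt)^α. -/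
/-! With `G t = ∫ s in t..1, g s`, monotonicity gives `(1 - t) * g t ≤ G t`, hence
`α (1 - t)^(α-1) g(t)^α ≤ α G(t)^(α-1) g(t) ≤ α G(t)^(α-1) g(t+)`, and the right-hand side is the
right derivative of `-G^α` (`g(t+) = sInf (g '' Ioo t 1)` is the right limit of `g`). Integrating over
`[0, 1]` bounds the left-hand side by `G(0)^α - G(1)^α = (∫ g)^α`. -/

open MeasureTheory Set Filter Topology intervalIntegral

theorem Real.rpow_sub_one_mul_rpow_le {α w y z : ℝ} (hα : 1 ≤ α) (hw : 0 ≤ w) (hy : 0 ≤ y)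
    (hwyz : w * y ≤ z) : w ^ (α - 1) * y ^ α ≤ z ^ (α - 1) * y := by
  have hy_pow : y ^ α = y ^ (α - 1) * y := by
    conv_lhs => rw [← sub_add_cancel α 1]
    rw [Real.rpow_add' hy (by linarith), Real.rpow_one]
  calc w ^ (α - 1) * y ^ α = (w * y) ^ (α - 1) * y := by
        rw [hy_pow, Real.mul_rpow hw hy, mul_assoc]
    _ ≤ z ^ (α - 1) * y := by gcongr

namespace MonotoneOn

variable {g : ℝ → ℝ} {a b : ℝ}

theorem mul_le_setIntegral_Ioo (hmono : MonotoneOn g (Ioo a b))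
    (hint : IntegrableOn g (Ioo a b)) {t : ℝ} (ht : t ∈ Ioo a b) :
    (b - t) * g t ≤ ∫ s in Ioo t b, g s := by
  have hsub : Ioo t b ⊆ Ioo a b := Ioo_subset_Ioo_left ht.1.le
  calc (b - t) * g t = ∫ _ in Ioo t b, g t := by
        rw [setIntegral_const, Real.volume_real_Ioo_of_le ht.2.le, smul_eq_mul]
    _ ≤ ∫ s in Ioo t b, g s :=
        setIntegral_mono_on (integrableOn_const measure_Ioo_lt_top.ne) (hint.mono_set hsub)
          measurableSet_Ioo fun s hs => hmono ht (hsub hs) hs.1.le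

theorem hasDerivWithinAt_integral_Ioi (hmono : MonotoneOn g (Ioo a b))
    (hint : IntegrableOn g (Ioo a b)) {x : ℝ} (hx : x ∈ Ioo a b) :
    HasDerivWithinAt (fun t => ∫ s in t..b, g s) (-sInf (g '' Ioo x b)) (Ioi x) x := by
  have hsub : Ioo x b ⊆ Ioo a b := Ioo_subset_Ioo_left hx.1.le
  have hlim : Tendsto g (𝓝[>] x) (𝓝 (sInf (g '' Ioo x b))) :=
    (hmono.mono hsub).tendsto_nhdsWithin_Ioo_right (nonempty_Ioo.2 hx.2)
      ⟨g x, forall_mem_image.2 fun s hs => hmono hx (hsub hs) hs.1.le⟩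
  have hmeas : StronglyMeasurableAtFilter g (𝓝[>] x) :=
    ⟨Ioo x b, Ioo_mem_nhdsGT hx.2, (hint.mono_set hsub).aestronglyMeasurable⟩
  have hii : IntervalIntegrable g volume x b :=
    (intervalIntegrable_iff_integrableOn_Ioo_of_le hx.2.le).2 (hint.mono_set hsub)
  exact (integral_hasDerivWithinAt_of_tendsto_ae_left (s := Ici x) hii hmeas
    (hlim.mono_left inf_le_left)).mono Ioi_subset_Ici_self

variable {α : ℝ}

theorem sub_rpow_mul_rpow_le_setIntegral_rpow_mul (hα : 1 ≤ α)
    (hg0 : ∀ t ∈ Ioo a b, 0 ≤ g t) (hmono : MonotoneOn g (Ioo a b))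
    (hint : IntegrableOn g (Ioo a b)) {t : ℝ} (ht : t ∈ Ioo a b) :
    (b - t) ^ (α - 1) * g t ^ α ≤ (∫ s in Ioo t b, g s) ^ (α - 1) * g t :=
  Real.rpow_sub_one_mul_rpow_le hα (by linarith [ht.2]) (hg0 t ht)
    (hmono.mul_le_setIntegral_Ioo hint ht)

theorem integrableOn_sub_rpow_mul_rpow (hα : 1 ≤ α)
    (hg0 : ∀ t ∈ Ioo a b, 0 ≤ g t) (hmono : MonotoneOn g (Ioo a b))
    (hint : IntegrableOn g (Ioo a b)) :
    IntegrableOn (fun t => (b - t) ^ (α - 1) * g t ^ α) (Ioo a b) := by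
  have hmeas : AEStronglyMeasurable (fun t => (b - t) ^ (α - 1) * g t ^ α)
      (volume.restrict (Ioo a b)) :=
    (((Real.continuous_rpow_const (by linarith)).comp
      (continuous_const.sub continuous_id)).aemeasurable.mul
      ((Real.continuous_rpow_const (by linarith)).measurable.comp_aemeasurable
        hint.aestronglyMeasurable.aemeasurable)).aestronglyMeasurable
  refine Integrable.mono' (hint.const_mul ((∫ s in Ioo a b, g s) ^ (α - 1))) hmeas ?_
  filter_upwards [ae_restrict_mem measurableSet_Ioo] with t ht
  have hsub : Ioo t b ⊆ Ioo a b := Ioo_subset_Ioo_left ht.1.le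
  have hnonneg : 0 ≤ (b - t) ^ (α - 1) * g t ^ α := by
    have := hg0 t ht
    have : 0 ≤ b - t := by linarith [ht.2]
    positivity
  have htail : ∫ s in Ioo t b, g s ≤ ∫ s in Ioo a b, g s :=
    setIntegral_mono_set hint ((ae_restrict_iff' measurableSet_Ioo).2 (ae_of_all _ hg0))
      hsub.eventuallyLE
  rw [Real.norm_of_nonneg hnonneg]
  calc (b - t) ^ (α - 1) * g t ^ α ≤ (∫ s in Ioo t b, g s) ^ (α - 1) * g t :=
        sub_rpow_mul_rpow_le_setIntegral_rpow_mul hα hg0 hmono hint ht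
    _ ≤ (∫ s in Ioo a b, g s) ^ (α - 1) * g t := by
        have := hg0 t ht
        gcongr
        exact setIntegral_nonneg measurableSet_Ioo fun s hs => hg0 s (hsub hs)

theorem mul_integral_sub_rpow_mul_rpow_le (hα : 1 ≤ α) (hab : a ≤ b)
    (hg0 : ∀ t ∈ Ioo a b, 0 ≤ g t) (hmono : MonotoneOn g (Ioo a b))
    (hint : IntegrableOn g (Ioo a b)) :
    α * ∫ t in Ioo a b, (b - t) ^ (α - 1) * g t ^ α ≤ (∫ t in Ioo a b, g t) ^ α := by
  set G : ℝ → ℝ := fun t => ∫ s in t..b, g s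
  have hG : ∀ t ≤ b, G t = ∫ s in Ioo t b, g s := fun t ht => by
    simp only [G]
    rw [integral_of_le ht, integral_Ioc_eq_integral_Ioo]
  have hcont : ContinuousOn (fun t => -G t ^ α) (Icc a b) := by
    have := continuousOn_primitive_interval_left (μ := volume) (f := g) (a := a) (b := b)
      (by rwa [uIcc_of_le hab, integrableOn_Icc_iff_integrableOn_Ioo])
    rw [uIcc_of_le hab] at this
    exact (this.rpow_const fun _ _ => Or.inr (by linarith)).neg
  have hderiv : ∀ x ∈ Ioo a b, HasDerivWithinAt (fun t => -G t ^ α)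
      (α * G x ^ (α - 1) * sInf (g '' Ioo x b)) (Ioi x) x := by
    intro x hx
    rw [show α * G x ^ (α - 1) * sInf (g '' Ioo x b) =
      -(α * G x ^ (α - 1) * -sInf (g '' Ioo x b)) by ring]
    exact ((Real.hasDerivAt_rpow_const (Or.inr hα)).comp_hasDerivWithinAt x
      (hmono.hasDerivWithinAt_integral_Ioi hint hx)).neg
  have hbound : ∀ x ∈ Ioo a b, α * ((b - x) ^ (α - 1) * g x ^ α) ≤
      α * G x ^ (α - 1) * sInf (g '' Ioo x b) := by
    intro x hx
    have hgx : g x ≤ sInf (g '' Ioo x b) :=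
      le_csInf ((nonempty_Ioo.2 hx.2).image g)
        (forall_mem_image.2 fun s hs => hmono hx ⟨hx.1.trans hs.1, hs.2⟩ hs.1.le)
    have hGx : 0 ≤ G x := hG x hx.2.le ▸
      setIntegral_nonneg measurableSet_Ioo fun s hs => hg0 s ⟨hx.1.trans hs.1, hs.2⟩
    calc α * ((b - x) ^ (α - 1) * g x ^ α) ≤ α * (G x ^ (α - 1) * g x) := by
          refine mul_le_mul_of_nonneg_left ?_ (by linarith)
          exact hG x hx.2.le ▸ sub_rpow_mul_rpow_le_setIntegral_rpow_mul hα hg0 hmono hint hx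
      _ ≤ α * G x ^ (α - 1) * sInf (g '' Ioo x b) := by
          rw [← mul_assoc]
          gcongr
  have hφint : IntegrableOn (fun t => α * ((b - t) ^ (α - 1) * g t ^ α)) (Icc a b) := by
    rw [integrableOn_Icc_iff_integrableOn_Ioo]
    exact (integrableOn_sub_rpow_mul_rpow hα hg0 hmono hint).const_mul α
  have hFTC := integral_le_sub_of_hasDeriv_right_of_le hab hcont hderiv hφint hbound
  rwa [intervalIntegral.integral_const_mul, integral_of_le hab, integral_Ioc_eq_integral_Ioo,
    hG a hab, show G b = 0 from integral_same, Real.zero_rpow (by linarith), neg_zero, zero_sub,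
    neg_neg] at hFTC

end MonotoneOn

theorem lintegral_pow_le_pow_integral_of_monotone
    (α : ℝ) (hα : 1 < α) (g : ℝ → ℝ)
    (hg0 : ∀ t ∈ Set.Ioo (0 : ℝ) 1, 0 ≤ g t)
    (hmono : MonotoneOn g (Set.Ioo (0 : ℝ) 1))
    (hint : IntegrableOn g (Set.Ioo (0 : ℝ) 1)) :
    ENNReal.ofReal α *
        ∫⁻ t in Set.Ioo (0 : ℝ) 1, ENNReal.ofReal ((1 - t) ^ (α - 1) * g t ^ α) ≤
      ENNReal.ofReal ((∫ t in Set.Ioo (0 : ℝ) 1, g t) ^ α) := by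
  have hnonneg :
      0 ≤ᵐ[volume.restrict (Ioo (0 : ℝ) 1)] fun t => (1 - t) ^ (α - 1) * g t ^ α := by
    filter_upwards [ae_restrict_mem measurableSet_Ioo] with t ht
    have := hg0 t ht
    have : 0 ≤ 1 - t := by linarith [ht.2]
    positivity
  rw [← ofReal_integral_eq_lintegral_ofReal
      (hmono.integrableOn_sub_rpow_mul_rpow hα.le hg0 hint) hnonneg,
    ← ENNReal.ofReal_mul (by linarith)]
  exact ENNReal.ofReal_le_ofReal
    (hmono.mul_integral_sub_rpow_mul_rpow_le hα.le zero_le_one hg0 hint)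
end

section
/- Let α > 1, θ > 0, t_0 ∈ (0,1), and g(t) = θ·1_{(t_0,1)}(t). Then α ∫_0^1 (1−t)^{α−1} g(t)^α dt = (∫_0^1 g(t) dt)^α; the same equality holds when g is constant. -/
/-! Both sides are computed explicitly. Since `α ∫ₐ¹ (1 - t)^(α-1) dt = (1 - a)^α`, the weighted
moment of the constant `c` on `(a, 1)` is `((1 - a) c)^α`, which is the `α`-th power of
`∫ₐ¹ c dt`. The indicator `θ 1_{(t₀,1)}` is exactly this situation with `a = t₀`, `c = θ`, and a
constant is the case `a = 0`. -/

open MeasureTheory Set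

lemma mul_integral_Ioo_one_sub_rpow {α a : ℝ} (hα : 0 < α) (ha : a ≤ 1) :
    α * ∫ t in Ioo a 1, (1 - t) ^ (α - 1) = (1 - a) ^ α := by
  rw [← integral_Ioc_eq_integral_Ioo, ← intervalIntegral.integral_of_le ha,
    intervalIntegral.integral_comp_sub_left (fun x => x ^ (α - 1)) 1,
    integral_rpow (Or.inl (by linarith))]
  simp only [sub_self, sub_add_cancel, Real.zero_rpow hα.ne', sub_zero]
  field_simp

lemma mul_integral_Ioo_one_sub_rpow_mul_const_rpow {α a c : ℝ} (hα : 0 < α) (ha : a ≤ 1)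
    (hc : 0 ≤ c) :
    α * ∫ t in Ioo a 1, (1 - t) ^ (α - 1) * c ^ α = (∫ _ in Ioo a 1, c) ^ α := by
  rw [integral_mul_const, ← mul_assoc, mul_integral_Ioo_one_sub_rpow hα ha, setIntegral_const,
    Real.volume_real_Ioo_of_le ha, smul_eq_mul, Real.mul_rpow (by linarith) hc]

lemma setIntegral_Ioo_indicator_Ioo {f : ℝ → ℝ} {a b c : ℝ} (hab : a ≤ b) :
    ∫ t in Ioo a c, (Ioo b c).indicator f t = ∫ t in Ioo b c, f t := by
  rw [setIntegral_indicator measurableSet_Ioo,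
    inter_eq_self_of_subset_right (Ioo_subset_Ioo_left hab)]

theorem equality_cases_moment_inequality
    (α : ℝ) (hα : 1 < α) (θ : ℝ) (hθ : 0 < θ) (t₀ : ℝ) (ht₀ : t₀ ∈ Set.Ioo (0 : ℝ) 1) :
    (α * ∫ t in Set.Ioo (0 : ℝ) 1,
        (1 - t) ^ (α - 1) * (Set.indicator (Set.Ioo t₀ 1) (fun _ => θ) t) ^ α =
      (∫ t in Set.Ioo (0 : ℝ) 1, Set.indicator (Set.Ioo t₀ 1) (fun _ => θ) t) ^ α) ∧
    ∀ c : ℝ, 0 ≤ c →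
      α * ∫ t in Set.Ioo (0 : ℝ) 1, (1 - t) ^ (α - 1) * c ^ α =
        (∫ t in Set.Ioo (0 : ℝ) 1, (fun _ => c) t) ^ α := by
  have hα₀ : 0 < α := by linarith
  obtain ⟨ht₀_pos, ht₀_lt_one⟩ := ht₀
  refine ⟨?_, fun c hc => mul_integral_Ioo_one_sub_rpow_mul_const_rpow hα₀ zero_le_one hc⟩
  have hindicator (t : ℝ) :
      (1 - t) ^ (α - 1) * (Ioo t₀ 1).indicator (fun _ => θ) t ^ α =
        (Ioo t₀ 1).indicator (fun t => (1 - t) ^ (α - 1) * θ ^ α) t := by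
    rw [indicator_mul_right]
    exact congrArg _ (congrFun (indicator_comp_of_zero (g := (· ^ α)) (Real.zero_rpow hα₀.ne')) t).symm
  simp_rw [hindicator, setIntegral_Ioo_indicator_Ioo ht₀_pos.le]
  exact mul_integral_Ioo_one_sub_rpow_mul_const_rpow hα₀ ht₀_lt_one.le hθ.le
end

section
/- Let n ≥ 3, k ∈ {2,...,n−1}, α ∈ [1, n+1−k), and let G_{k:n}(x) = Σ_{j=k}^n C(n,j) x^j (1−x)^{n−j} with density g_{k:n}(x) = x^{k−1}(1−x)^{n−k}/B(k, n+1−k). Then the equation α(1 − G_{k:n}(ρ)) = (1−ρ) g_{k:n}(ρ) has a unique solution ρ ∈ (0,1), and moreover ρ < (k−1)/(n−α). -/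
/-- Distribution function of the `k`-th order statistic of `n` iid uniforms (1-indexed `k`). -/
noncomputable def Gkn (n k : ℕ) (x : ℝ) : ℝ :=
  ∑ j ∈ Finset.Icc k n, (n.choose j : ℝ) * x ^ j * (1 - x) ^ (n - j)

/-- Density of the `k`-th order statistic of `n` iid uniforms (1-indexed `k`). -/
noncomputable def gkn (n k : ℕ) (x : ℝ) : ℝ :=
  ((n.factorial : ℝ) / ((k - 1).factorial * (n - k).factorial)) * x ^ (k - 1) * (1 - x) ^ (n - k)

/-! With `K = k - 1` and the odds `t = (1 - ρ) / ρ`, both sides of the equation carry the factor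
`ρ ^ K * (1 - ρ) ^ (n - K)`. Dividing it out turns the equation into `α * D t = C(n, K) * (n - K)`,
where `D = lowerTailPoly n K` has nonnegative coefficients, constant term `C(n, K)` and leading
coefficient `1`. As `D` is strictly increasing and unbounded on `[0, ∞)` and `α < n - K`,
there is exactly one root `t > 0`, hence exactly one `ρ`.

For the bound, the coefficients of `D` read from the constant term upwards decay at least
geometrically with ratio `K / (n - K + 1)`, so at `t₀ = (n - K - α) / K` a geometric series gives
`D t₀ ≤ C(n, K) * (n - K + 1) / (α + 1) < C(n, K) * (n - K) / α`. Monotonicity of `D` then forces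
`t > t₀`, which is `ρ < K / (n - α)`. -/

open Finset

noncomputable def lowerTailPoly (n K : ℕ) (t : ℝ) : ℝ :=
  ∑ j ∈ range (K + 1), (n.choose j : ℝ) * t ^ (K - j)

section lowerTailPoly

variable {n K : ℕ}

theorem continuous_lowerTailPoly : Continuous (lowerTailPoly n K) := by
  unfold lowerTailPoly; fun_prop

theorem lowerTailPoly_zero : lowerTailPoly n K 0 = n.choose K := by
  rw [lowerTailPoly, sum_eq_single_of_mem K (self_mem_range_succ K)]
  · simp
  · intro j hj hjK
    rw [zero_pow (by grind), mul_zero]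

theorem pow_le_lowerTailPoly {t : ℝ} (ht : 0 ≤ t) : t ^ K ≤ lowerTailPoly n K t := by
  simpa [lowerTailPoly] using single_le_sum (f := fun j ↦ (n.choose j : ℝ) * t ^ (K - j))
    (fun j _ ↦ by positivity) (mem_range.2 K.succ_pos)

theorem strictMonoOn_lowerTailPoly (hK : K ≠ 0) : StrictMonoOn (lowerTailPoly n K) (Set.Ici 0) := by
  intro s (hs : 0 ≤ s) t _ hst
  apply sum_lt_sum
  · intro j _
    gcongr
  · exact ⟨0, mem_range.2 K.succ_pos, by simpa using pow_lt_pow_left₀ hst hs hK⟩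

theorem pow_mul_lowerTailPoly {x : ℝ} (hx : x ≠ 0) :
    x ^ K * lowerTailPoly n K ((1 - x) / x) =
      ∑ j ∈ range (K + 1), (n.choose j : ℝ) * x ^ j * (1 - x) ^ (K - j) := by
  rw [lowerTailPoly, mul_sum]
  refine sum_congr rfl fun j hj ↦ ?_
  rw [← Nat.add_sub_cancel' (Nat.le_of_lt_succ (mem_range.1 hj)), pow_add, Nat.add_sub_cancel_left,
    div_pow]
  field_simp

theorem choose_sub_mul_pow_le (hK : K ≤ n) {i : ℕ} (hi : i ≤ K) :
    n.choose (K - i) * (n - K + 1) ^ i ≤ n.choose K * K ^ i := by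
  induction i with
  | zero => simp
  | succ i ih =>
    have hstep : n.choose (K - (i + 1)) * (n - K + 1) ≤ n.choose (K - i) * K := by
      have h := Nat.choose_succ_right_eq n (K - (i + 1))
      rw [show K - (i + 1) + 1 = K - i by omega, show n - (K - (i + 1)) = n - K + (i + 1) by omega]
        at h
      calc n.choose (K - (i + 1)) * (n - K + 1)
          ≤ n.choose (K - (i + 1)) * (n - K + (i + 1)) := by gcongr; omega
        _ = n.choose (K - i) * (K - i) := h.symm
        _ ≤ n.choose (K - i) * K := by gcongr; omega
    calc n.choose (K - (i + 1)) * (n - K + 1) ^ (i + 1)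
        = n.choose (K - (i + 1)) * (n - K + 1) * (n - K + 1) ^ i := by ring
      _ ≤ n.choose (K - i) * K * (n - K + 1) ^ i := by gcongr
      _ = K * (n.choose (K - i) * (n - K + 1) ^ i) := by ring
      _ ≤ K * (n.choose K * K ^ i) := Nat.mul_le_mul_left _ (ih (by omega))
      _ = n.choose K * K ^ (i + 1) := by ring

theorem lowerTailPoly_le (hK : K ≤ n) {t : ℝ} (ht : 0 ≤ t) (hKt : K * t < n - K + 1) :
    lowerTailPoly n K t ≤ n.choose K * ((n - K + 1) / (n - K + 1 - K * t)) := by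
  have hM : (0 : ℝ) < n - K + 1 := by linarith [mul_nonneg K.cast_nonneg ht]
  set s := K * t / (n - K + 1) with hs_def
  have hs : s < 1 := (div_lt_one hM).2 hKt
  have hterm : ∀ i ∈ range (K + 1), (n.choose (K - i) : ℝ) * t ^ i ≤ n.choose K * s ^ i := by
    intro i hi
    have hnat := choose_sub_mul_pow_le hK (Nat.le_of_lt_succ (mem_range.1 hi))
    have hreal : ((n.choose (K - i) * (n - K + 1) ^ i : ℕ) : ℝ) ≤ (n.choose K * K ^ i : ℕ) :=
      Nat.cast_le.2 hnat
    push_cast [Nat.cast_sub hK] at hreal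
    calc (n.choose (K - i) : ℝ) * t ^ i
        = n.choose (K - i) * (n - K + 1) ^ i * (t / (n - K + 1)) ^ i := by
          rw [div_pow]; field_simp
      _ ≤ n.choose K * K ^ i * (t / (n - K + 1)) ^ i := by gcongr
      _ = n.choose K * s ^ i := by rw [mul_assoc, ← mul_pow, ← mul_div_assoc]
  have hreflect : lowerTailPoly n K t = ∑ i ∈ range (K + 1), (n.choose (K - i) : ℝ) * t ^ i := by
    rw [lowerTailPoly, ← sum_range_reflect]
    refine sum_congr rfl fun i hi ↦ ?_
    rw [Nat.add_sub_cancel, Nat.sub_sub_self (Nat.le_of_lt_succ (mem_range.1 hi))]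
  calc lowerTailPoly n K t
      ≤ n.choose K * ∑ i ∈ range (K + 1), s ^ i := by
        rw [hreflect, mul_sum]; exact sum_le_sum hterm
    _ ≤ n.choose K * (1 / (1 - s)) := by
        gcongr
        simpa using geom_sum_Ico_le_of_lt_one (m := 0) (n := K + 1) (by positivity) hs
    _ = n.choose K * ((n - K + 1) / (n - K + 1 - K * t)) := by
        rw [hs_def, one_sub_div hM.ne', one_div_div]

theorem existsUnique_mul_lowerTailPoly_odds_eq (hK : K ≠ 0) {α c : ℝ} (hα : 0 < α)
    (hc : α * n.choose K < c) :
    ∃! x, x ∈ Set.Ioo 0 1 ∧ α * lowerTailPoly n K ((1 - x) / x) = c := by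
  have hmono := strictMonoOn_lowerTailPoly (n := n) hK
  set T := c / α + 1
  have hT : 1 ≤ T := by
    have : 0 ≤ c / α := div_nonneg (by nlinarith [(n.choose K).cast_nonneg (α := ℝ)]) hα.le
    linarith
  have hcT : c < α * lowerTailPoly n K T :=
    calc c < α * T := by rw [mul_add, mul_div_cancel₀ c hα.ne']; linarith
      _ ≤ α * T ^ K := by gcongr; exact le_self_pow₀ hT hK
      _ ≤ α * lowerTailPoly n K T := by gcongr; exact pow_le_lowerTailPoly (by linarith)
  have hcont : Continuous fun t ↦ α * lowerTailPoly n K t :=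
    continuous_const.mul continuous_lowerTailPoly
  obtain ⟨t, ⟨ht, -⟩, htc⟩ : ∃ t ∈ Set.Ioo 0 T, α * lowerTailPoly n K t = c :=
    intermediate_value_Ioo (by linarith) hcont.continuousOn
      ⟨by simpa only [lowerTailPoly_zero] using hc, hcT⟩
  have h1t : (0 : ℝ) < 1 + t := by linarith
  have hodds : (1 - 1 / (1 + t)) / (1 / (1 + t)) = t := by field_simp; ring
  refine ⟨1 / (1 + t), ⟨⟨by positivity, (div_lt_one h1t).2 (by linarith)⟩, by rwa [hodds]⟩, ?_⟩
  rintro y ⟨hy, hyc⟩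
  have hy_odds : (1 - y) / y = t := by
    refine hmono.injOn ?_ ht.le (by rw [← htc] at hyc; exact (mul_right_inj' hα.ne').1 hyc)
    exact div_nonneg (by linarith [hy.2]) hy.1.le
  have hy0 : y ≠ 0 := hy.1.ne'
  rw [← hy_odds]; field_simp; ring

theorem mul_lowerTailPoly_lt (hK0 : K ≠ 0) (hK : K ≤ n) {α : ℝ} (hα : 0 < α)
    (hαK : α < n - K) :
    α * lowerTailPoly n K ((n - K - α) / K) < n.choose K * (n - K) := by
  set t := (n - K - α) / K
  have hKt : K * t = n - K - α := mul_div_cancel₀ _ (Nat.cast_ne_zero.2 hK0)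
  have ht : 0 ≤ t := div_nonneg (by linarith) K.cast_nonneg
  have hD := lowerTailPoly_le hK ht (by rw [hKt]; linarith)
  rw [hKt, show (n : ℝ) - K + 1 - (n - K - α) = α + 1 by ring] at hD
  have hC : (0 : ℝ) < n.choose K := by exact_mod_cast Nat.choose_pos hK
  calc α * lowerTailPoly n K t ≤ α * (n.choose K * ((n - K + 1) / (α + 1))) := by gcongr
    _ = n.choose K * (α * (n - K + 1) / (α + 1)) := by ring
    _ < n.choose K * (n - K) := by
        gcongr
        rw [div_lt_iff₀ (by linarith)]
        linarith

end lowerTailPoly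

theorem one_sub_Gkn {n k : ℕ} (hk : k ≤ n + 1) (x : ℝ) :
    1 - Gkn n k x = ∑ j ∈ range k, (n.choose j : ℝ) * x ^ j * (1 - x) ^ (n - j) := by
  have htotal : ∑ j ∈ range (n + 1), (n.choose j : ℝ) * x ^ j * (1 - x) ^ (n - j) = 1 := by
    have h := add_pow x (1 - x) n
    rw [add_sub_cancel, one_pow] at h
    exact (h.trans (sum_congr rfl fun _ _ ↦ by ring)).symm
  have hsplit := sum_range_add_sum_Ico (fun j ↦ (n.choose j : ℝ) * x ^ j * (1 - x) ^ (n - j)) hk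
  rw [Gkn, ← Ico_add_one_right_eq_Icc]
  linarith

theorem one_sub_Gkn_succ {n K : ℕ} (hK : K ≤ n) {x : ℝ} (hx : x ≠ 0) :
    1 - Gkn n (K + 1) x = x ^ K * (1 - x) ^ (n - K) * lowerTailPoly n K ((1 - x) / x) := by
  rw [one_sub_Gkn (by omega), mul_right_comm, pow_mul_lowerTailPoly hx, sum_mul]
  refine sum_congr rfl fun j hj ↦ ?_
  rw [← Nat.sub_add_sub_cancel hK (Nat.le_of_lt_succ (mem_range.1 hj)), pow_add]
  ring

theorem one_sub_mul_gkn_succ {n K : ℕ} (hK : K < n) (x : ℝ) :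
    (1 - x) * gkn n (K + 1) x = n.choose K * (n - K) * (x ^ K * (1 - x) ^ (n - K)) := by
  have hfac :
      (n.factorial : ℝ) = n.choose K * K.factorial * ((n - K) * (n - (K + 1)).factorial) := by
    have h := Nat.choose_mul_factorial_mul_factorial hK.le
    rw [show n - K = n - (K + 1) + 1 by omega, Nat.factorial_succ] at h
    rw [← h]
    push_cast [Nat.cast_sub (show K + 1 ≤ n by omega)]
    ring
  rw [gkn, Nat.add_sub_cancel, hfac, show n - K = n - (K + 1) + 1 by omega, pow_succ]
  field_simp

theorem density_equation_iff {n K : ℕ} (hK : K < n) {α x : ℝ} (hx : x ∈ Set.Ioo 0 1) :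
    α * (1 - Gkn n (K + 1) x) = (1 - x) * gkn n (K + 1) x ↔
      α * lowerTailPoly n K ((1 - x) / x) = n.choose K * (n - K) := by
  have hpos : 0 < x ^ K * (1 - x) ^ (n - K) := by
    have := hx.1; have := sub_pos.2 hx.2; positivity
  rw [one_sub_Gkn_succ hK.le hx.1.ne', one_sub_mul_gkn_succ hK, mul_left_comm,
    mul_comm _ (x ^ K * _), mul_right_inj' hpos.ne']

theorem exists_unique_root_of_density_equation_general
    (n k : ℕ) (hk : 2 ≤ k)
    (α : ℝ) (hα : 1 ≤ α) (hα' : α < n + 1 - k) :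
    (∃! ρ : ℝ, ρ ∈ Set.Ioo (0 : ℝ) 1 ∧ α * (1 - Gkn n k ρ) = (1 - ρ) * gkn n k ρ) ∧
    ∀ ρ : ℝ, ρ ∈ Set.Ioo (0 : ℝ) 1 → α * (1 - Gkn n k ρ) = (1 - ρ) * gkn n k ρ →
      ρ < (k - 1) / (n - α) := by
  obtain ⟨K, rfl⟩ : ∃ K, k = K + 1 := ⟨k - 1, by omega⟩
  have hK0 : K ≠ 0 := by omega
  push_cast at hα' ⊢
  have hαK : α < n - K := by linarith
  have hKn : K < n := by exact_mod_cast (by linarith : (K : ℝ) < n)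
  have hα0 : 0 < α := by linarith
  refine ⟨?_, fun ρ hρ hroot ↦ ?_⟩
  · rw [existsUnique_congr fun ρ ↦ and_congr_right fun hρ ↦ density_equation_iff hKn hρ]
    have hC : (0 : ℝ) < n.choose K := by exact_mod_cast Nat.choose_pos hKn.le
    exact existsUnique_mul_lowerTailPoly_odds_eq hK0 hα0 (by nlinarith)
  · rw [density_equation_iff hKn hρ] at hroot
    have hodds : (n - K - α) / K < (1 - ρ) / ρ := by
      rw [← (strictMonoOn_lowerTailPoly hK0).lt_iff_lt
        (div_nonneg (sub_nonneg.2 hαK.le) K.cast_nonneg) (div_nonneg (by linarith [hρ.2]) hρ.1.le),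
        ← mul_lt_mul_iff_right₀ hα0, hroot]
      exact mul_lowerTailPoly_lt hK0 hKn.le hα0 hαK
    have hKpos : (0 : ℝ) < K := by exact_mod_cast Nat.pos_of_ne_zero hK0
    rw [div_lt_div_iff₀ hKpos hρ.1] at hodds
    rw [add_sub_cancel_right, lt_div_iff₀ (by linarith)]
    linarith

theorem exists_unique_root_of_density_equation
    (n k : ℕ) (hn : 3 ≤ n) (hk : 2 ≤ k) (hk' : k ≤ n - 1)
    (α : ℝ) (hα : 1 ≤ α) (hα' : α < n + 1 - k) :
    (∃! ρ : ℝ, ρ ∈ Set.Ioo (0 : ℝ) 1 ∧ α * (1 - Gkn n k ρ) = (1 - ρ) * gkn n k ρ) ∧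
    ∀ ρ : ℝ, ρ ∈ Set.Ioo (0 : ℝ) 1 → α * (1 - Gkn n k ρ) = (1 - ρ) * gkn n k ρ →
      ρ < (k - 1) / (n - α) :=
  exists_unique_root_of_density_equation_general n k hk α hα hα'
end

section
/- Let n ≥ 3, k ∈ {2,...,n−1}, α ∈ [1, n+1−k), G_{k:n}(x) = Σ_{j=k}^n C(n,j) x^j(1−x)^{n−j}, and ρ the unique root in (0,1) of α(1−G_{k:n}(ρ)) = (1−ρ)g_{k:n}(ρ), where g_{k:n} = G'_{k:n}. Then for all x ∈ [0,1], 1 − G_{k:n}(x) ≤ A_{k:n}(α)(1−x)^α where A_{k:n}(α) = (1−G_{k:n}(ρ))/(1−ρ)^α, with equality if and only if x = ρ or x = 1. -/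
/-!
Put `H x = (1 - G x) / (1 - x) ^ α` and `φ x = α (1 - G x) - (1 - x) g x`, so that
`H' x = φ x / (1 - x) ^ (α + 1)` and `ρ` is a zero of `φ`; the claim is that `H` attains its
maximum over `[0, 1)` exactly at `ρ`. Writing `G` as a sum of Bernstein polynomials, the sum of
their derivatives telescopes to `g`, and then
`φ' x = c x ^ (k - 2) (1 - x) ^ (n - k) ((n - α) x - (k - 1))` with `c > 0`. So `φ` decreases
up to `(k - 1) / (n - α) < 1` and increases after it; since `φ 1 = 0`, the zero `ρ` lies in the
decreasing part and `φ` is positive on `[0, ρ)` and negative on `(ρ, 1)`. Hence `H` increases on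
`[0, ρ]` and decreases on `[ρ, 1)`. At `x = 1` both sides of the inequality vanish.
-/

open Set Polynomial

theorem derivative_sum_bernsteinPolynomial_Icc {R : Type*} [CommRing R] {n k : ℕ}
    (hk : 1 ≤ k) (hkn : k ≤ n) :
    derivative (∑ j ∈ Finset.Icc k n, bernsteinPolynomial R n j) =
      n * bernsteinPolynomial R (n - 1) (k - 1) := by
  set f : ℕ → R[X] := fun j => -(n * bernsteinPolynomial R (n - 1) (j - 1))
  have hstep : ∀ j ∈ Finset.Icc k n, derivative (bernsteinPolynomial R n j) = f (j + 1) - f j := by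
    intro j hj
    obtain ⟨i, rfl⟩ : ∃ i, j = i + 1 := ⟨j - 1, by grind⟩
    simp only [f, bernsteinPolynomial.derivative_succ, Nat.add_sub_cancel]
    ring
  rw [derivative_sum, Finset.sum_congr rfl hstep, Finset.sum_Icc_sub hkn]
  simp [f, bernsteinPolynomial.eq_zero_of_lt R (by omega : n - 1 < n)]

theorem Gkn_eq_eval_sum_bernsteinPolynomial (n k : ℕ) (x : ℝ) :
    Gkn n k x = (∑ j ∈ Finset.Icc k n, bernsteinPolynomial ℝ n j).eval x := by
  simp [Gkn, bernsteinPolynomial, eval_finsetSum]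

theorem gkn_eq_mul_eval_bernsteinPolynomial {n k : ℕ} (hk : 1 ≤ k) (hkn : k ≤ n) (x : ℝ) :
    gkn n k x = n * (bernsteinPolynomial ℝ (n - 1) (k - 1)).eval x := by
  have hfact : (n.factorial : ℝ) / ((k - 1).factorial * (n - k).factorial) =
      n * (n - 1).choose (k - 1) := by
    have h := Nat.choose_mul_factorial_mul_factorial (show k - 1 ≤ n - 1 by omega)
    rw [show n - 1 - (k - 1) = n - k by omega] at h
    rw [div_eq_iff (by positivity), ← Nat.mul_factorial_pred (show n ≠ 0 by omega), ← h]
    push_cast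
    ring
  simp [gkn, bernsteinPolynomial, hfact, show n - 1 - (k - 1) = n - k by omega]
  ring

theorem hasDerivAt_Gkn {n k : ℕ} (hk : 1 ≤ k) (hkn : k ≤ n) (x : ℝ) :
    HasDerivAt (Gkn n k) (gkn n k x) x := by
  have h := (∑ j ∈ Finset.Icc k n, bernsteinPolynomial ℝ n j).hasDerivAt x
  rw [derivative_sum_bernsteinPolynomial_Icc hk hkn] at h
  simp only [funext (Gkn_eq_eval_sum_bernsteinPolynomial n k),
    gkn_eq_mul_eval_bernsteinPolynomial hk hkn]
  simpa using h

theorem Gkn_one {n k : ℕ} (hkn : k ≤ n) : Gkn n k 1 = 1 := by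
  simp [Gkn_eq_eval_sum_bernsteinPolynomial, eval_finsetSum, bernsteinPolynomial.eval_at_1, hkn]

-- `φ` of the header; it equals `(1 - G) (α - (1 - x) h)` for the hazard rate `h = g / (1 - G)`.
noncomputable def hazardGap (n k : ℕ) (α x : ℝ) : ℝ :=
  α * (1 - Gkn n k x) - (1 - x) * gkn n k x

theorem hazardGap_one {n k : ℕ} (hkn : k ≤ n) (α : ℝ) : hazardGap n k α 1 = 0 := by
  simp [hazardGap, Gkn_one hkn]

theorem hasDerivAt_hazardGap {n k : ℕ} (hk : 2 ≤ k) (hkn : k ≤ n) (α x : ℝ) :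
    HasDerivAt (hazardGap n k α)
      (n.factorial / ((k - 1).factorial * (n - k).factorial) * x ^ (k - 2) * (1 - x) ^ (n - k) *
        ((n - α) * x - (k - 1))) x := by
  have hG := ((hasDerivAt_Gkn (by omega) hkn x).const_sub 1).const_mul α
  -- with `k = m + 2`, `n = k + p` and `1 - x` absorbed into `gkn`, no natural subtraction is left
  obtain ⟨m, rfl⟩ : ∃ m, k = m + 2 := ⟨k - 2, by omega⟩
  obtain ⟨p, rfl⟩ : ∃ p, n = m + 2 + p := ⟨n - (m + 2), by omega⟩
  have hsub : m + 2 - 1 = m + 1 := rfl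
  set c : ℝ := (m + 2 + p).factorial / ((m + 1).factorial * p.factorial)
  have hshape : hazardGap (m + 2 + p) (m + 2) α =
      fun y => α * (1 - Gkn (m + 2 + p) (m + 2) y) - c * (y ^ (m + 1) * (1 - y) ^ (p + 1)) := by
    funext y
    simp only [hazardGap, gkn, c, hsub, Nat.add_sub_cancel_left]
    ring
  have hpow : HasDerivAt (fun y : ℝ => y ^ (m + 1) * (1 - y) ^ (p + 1))
      ((m + 1) * x ^ m * (1 - x) ^ (p + 1) - (p + 1) * x ^ (m + 1) * (1 - x) ^ p) x := by
    refine ((hasDerivAt_pow (m + 1) x).fun_mul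
      (((hasDerivAt_id x).const_sub 1).fun_pow (p + 1))).congr_deriv ?_
    simp only [Nat.add_sub_cancel, id, Nat.cast_add, Nat.cast_one]
    ring
  rw [hshape]
  refine (hG.fun_sub (hpow.const_mul c)).congr_deriv ?_
  simp only [gkn, c, hsub, Nat.add_sub_cancel, Nat.add_sub_cancel_left]
  push_cast
  ring

theorem exists_pos_hasDerivAt_hazardGap {n k : ℕ} (hk : 2 ≤ k) (hkn : k ≤ n) (α : ℝ) {x : ℝ}
    (hx : x ∈ Ioo 0 1) :
    ∃ c > 0, HasDerivAt (hazardGap n k α) (c * ((n - α) * x - (k - 1))) x :=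
  ⟨_, by have := hx.1; have := sub_pos.2 hx.2; positivity, hasDerivAt_hazardGap hk hkn α x⟩

theorem continuous_hazardGap {n k : ℕ} (hk : 2 ≤ k) (hkn : k ≤ n) (α : ℝ) :
    Continuous (hazardGap n k α) :=
  continuous_iff_continuousAt.2 fun x => (hasDerivAt_hazardGap hk hkn α x).continuousAt

theorem strictAntiOn_hazardGap {n k : ℕ} {α : ℝ} (hk : 2 ≤ k) (hkn : k ≤ n)
    (hα : α < n + 1 - k) : StrictAntiOn (hazardGap n k α) (Icc 0 ((k - 1) / (n - α))) := by
  have hnα : (0 : ℝ) < n - α := by linarith [(show (2 : ℝ) ≤ k by exact_mod_cast hk)]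
  refine strictAntiOn_of_deriv_neg (convex_Icc _ _) (continuous_hazardGap hk hkn α).continuousOn
    fun y hy => ?_
  rw [interior_Icc, mem_Ioo, lt_div_iff₀ hnα] at hy
  obtain ⟨c, hc, hderiv⟩ :=
    exists_pos_hasDerivAt_hazardGap hk hkn α ⟨hy.1, by nlinarith⟩
  rw [hderiv.deriv]
  exact mul_neg_of_pos_of_neg hc (by linarith)

theorem strictMonoOn_hazardGap {n k : ℕ} {α : ℝ} (hk : 2 ≤ k) (hkn : k ≤ n)
    (hα : α < n + 1 - k) : StrictMonoOn (hazardGap n k α) (Icc ((k - 1) / (n - α)) 1) := by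
  have hk1 : (1 : ℝ) ≤ k - 1 := by linarith [(show (2 : ℝ) ≤ k by exact_mod_cast hk)]
  have hnα : (0 : ℝ) < n - α := by linarith
  refine strictMonoOn_of_deriv_pos (convex_Icc _ _) (continuous_hazardGap hk hkn α).continuousOn
    fun y hy => ?_
  rw [interior_Icc, mem_Ioo, div_lt_iff₀ hnα] at hy
  obtain ⟨c, hc, hderiv⟩ :=
    exists_pos_hasDerivAt_hazardGap hk hkn α ⟨by nlinarith, hy.2⟩
  rw [hderiv.deriv]
  exact mul_pos hc (by linarith)

theorem lt_and_lt_of_strictAntiOn_of_strictMonoOn {α β : Type*} [LinearOrder α] [Preorder β]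
    {f : α → β} {a b c ρ : α} (hanti : StrictAntiOn f (Icc a c)) (hmono : StrictMonoOn f (Icc c b))
    (hcb : c ≤ b) (haρ : a ≤ ρ) (hρb : ρ < b) (hfρ : f ρ = f b) :
    (∀ y ∈ Ico a ρ, f ρ < f y) ∧ ∀ y ∈ Ioo ρ b, f y < f ρ := by
  have hρc : ρ < c := by
    by_contra! hcρ
    exact (hfρ ▸ hmono ⟨hcρ, hρb.le⟩ ⟨hcb, le_rfl⟩ hρb).false
  refine ⟨fun y hy => hanti ⟨hy.1, (hy.2.trans hρc).le⟩ ⟨haρ, hρc.le⟩ hy.2, fun y hy => ?_⟩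
  rcases le_or_gt y c with hyc | hcy
  · exact hanti ⟨haρ, hρc.le⟩ ⟨haρ.trans hy.1.le, hyc⟩ hy.1
  · exact hfρ ▸ hmono ⟨hcy.le, hy.2.le⟩ ⟨hcb, le_rfl⟩ hy.2

theorem hazardGap_pos_and_neg {n k : ℕ} {α ρ : ℝ} (hk : 2 ≤ k) (hkn : k ≤ n)
    (hα : α < n + 1 - k) (hρ : ρ ∈ Ioo 0 1) (hroot : hazardGap n k α ρ = 0) :
    (∀ y ∈ Ico 0 ρ, 0 < hazardGap n k α y) ∧ ∀ y ∈ Ioo ρ 1, hazardGap n k α y < 0 := by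
  have hk1 : (1 : ℝ) ≤ k - 1 := by linarith [(show (2 : ℝ) ≤ k by exact_mod_cast hk)]
  have hsign := lt_and_lt_of_strictAntiOn_of_strictMonoOn (strictAntiOn_hazardGap hk hkn hα)
    (strictMonoOn_hazardGap hk hkn hα) (div_le_one_of_le₀ (by linarith) (by linarith)) hρ.1.le
    hρ.2 (hroot.trans (hazardGap_one hkn α).symm)
  rwa [hroot] at hsign

-- `H` of the header.
noncomputable def survivalRatio (n k : ℕ) (α x : ℝ) : ℝ :=
  (1 - Gkn n k x) / (1 - x) ^ α

theorem hasDerivAt_survivalRatio {n k : ℕ} (hk : 1 ≤ k) (hkn : k ≤ n) (α : ℝ) {x : ℝ}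
    (hx : x < 1) :
    HasDerivAt (survivalRatio n k α) (hazardGap n k α x / (1 - x) ^ (α + 1)) x := by
  have hs : 0 < 1 - x := by linarith
  have hpow := ((hasDerivAt_id x).const_sub 1).rpow_const (p := α) (Or.inl hs.ne')
  refine (((hasDerivAt_Gkn hk hkn x).const_sub 1).div hpow (by positivity)).congr_deriv ?_
  have h1 : (1 - x) ^ α = (1 - x) ^ (α - 1) * (1 - x) := by
    rw [← Real.rpow_add_one hs.ne', sub_add_cancel]
  have h2 : (1 - x) ^ (α + 1) = (1 - x) ^ (α - 1) * (1 - x) * (1 - x) := by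
    rw [← h1, Real.rpow_add_one hs.ne']
  simp only [hazardGap, id, h1, h2]
  field_simp
  ring

theorem lt_of_strictMonoOn_Icc_of_strictAntiOn_Ico {α β : Type*} [LinearOrder α] [Preorder β]
    {f : α → β} {a b ρ x : α} (hmono : StrictMonoOn f (Icc a ρ)) (hanti : StrictAntiOn f (Ico ρ b))
    (hx : x ∈ Ico a b) (hxρ : x ≠ ρ) : f x < f ρ := by
  rcases hxρ.lt_or_gt with hlt | hgt
  · exact hmono ⟨hx.1, hlt.le⟩ ⟨hx.1.trans hlt.le, le_rfl⟩ hlt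
  · exact hanti ⟨le_rfl, hgt.trans hx.2⟩ ⟨hgt.le, hx.2⟩ hgt

theorem strictMonoOn_survivalRatio {n k : ℕ} {α ρ : ℝ} (hk : 1 ≤ k) (hkn : k ≤ n) (hρ : ρ < 1)
    (hpos : ∀ y ∈ Ico 0 ρ, 0 < hazardGap n k α y) :
    StrictMonoOn (survivalRatio n k α) (Icc 0 ρ) := by
  have hderiv (y : ℝ) (hy : y ≤ ρ) := hasDerivAt_survivalRatio hk hkn α (hy.trans_lt hρ)
  refine strictMonoOn_of_deriv_pos (convex_Icc _ _)
    (fun y hy => (hderiv y hy.2).continuousAt.continuousWithinAt) fun y hy => ?_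
  rw [interior_Icc] at hy
  rw [(hderiv y hy.2.le).deriv]
  exact div_pos (hpos y ⟨hy.1.le, hy.2⟩) (Real.rpow_pos_of_pos (by linarith [hy.2]) _)

theorem strictAntiOn_survivalRatio {n k : ℕ} {α ρ : ℝ} (hk : 1 ≤ k) (hkn : k ≤ n)
    (hneg : ∀ y ∈ Ioo ρ 1, hazardGap n k α y < 0) :
    StrictAntiOn (survivalRatio n k α) (Ico ρ 1) := by
  have hderiv (y : ℝ) (hy : y < 1) := hasDerivAt_survivalRatio hk hkn α hy
  refine strictAntiOn_of_deriv_neg (convex_Ico _ _)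
    (fun y hy => (hderiv y hy.2).continuousAt.continuousWithinAt) fun y hy => ?_
  rw [interior_Ico] at hy
  rw [(hderiv y hy.2).deriv]
  exact div_neg_of_neg_of_pos (hneg y hy) (Real.rpow_pos_of_pos (sub_pos.2 hy.2) _)

theorem survivalRatio_lt {n k : ℕ} {α ρ x : ℝ} (hk : 2 ≤ k) (hkn : k ≤ n)
    (hα : α < n + 1 - k) (hρ : ρ ∈ Ioo 0 1) (hroot : hazardGap n k α ρ = 0)
    (hx : x ∈ Ico 0 1) (hxρ : x ≠ ρ) : survivalRatio n k α x < survivalRatio n k α ρ := by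
  obtain ⟨hpos, hneg⟩ := hazardGap_pos_and_neg hk hkn hα hρ hroot
  exact lt_of_strictMonoOn_Icc_of_strictAntiOn_Ico
    (strictMonoOn_survivalRatio (by omega) hkn hρ.2 hpos)
    (strictAntiOn_survivalRatio (by omega) hkn hneg) hx hxρ

theorem survival_Gkn_le_Akn_mul_rpow_general
    (n k : ℕ) (hk : 2 ≤ k) (hk' : k ≤ n - 1)
    (α : ℝ) (hα : 1 ≤ α) (hα' : α < n + 1 - k)
    (ρ : ℝ) (hρ : ρ ∈ Set.Ioo (0 : ℝ) 1)
    (hroot : α * (1 - Gkn n k ρ) = (1 - ρ) * gkn n k ρ) :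
    ∀ x ∈ Set.Icc (0 : ℝ) 1,
      (1 - Gkn n k x ≤ (1 - Gkn n k ρ) / (1 - ρ) ^ α * (1 - x) ^ α) ∧
      (1 - Gkn n k x = (1 - Gkn n k ρ) / (1 - ρ) ^ α * (1 - x) ^ α ↔ x = ρ ∨ x = 1) := by
  have hkn : k ≤ n := by omega
  intro x hx
  rcases hx.2.eq_or_lt with rfl | hx1
  · have hzero : (0 : ℝ) ^ α = 0 := Real.zero_rpow (by linarith)
    simp [Gkn_one hkn, hzero]
  have hpow : 0 < (1 - x) ^ α := Real.rpow_pos_of_pos (sub_pos.2 hx1) α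
  have hsurv : 1 - Gkn n k x = survivalRatio n k α x * (1 - x) ^ α :=
    (div_mul_cancel₀ _ hpow.ne').symm
  rw [hsurv, ← survivalRatio]
  rcases eq_or_ne x ρ with rfl | hxρ
  · simp
  have hlt := mul_lt_mul_of_pos_right (survivalRatio_lt hk hkn hα' hρ (sub_eq_zero.2 hroot)
    ⟨hx.1, hx1⟩ hxρ) hpow
  exact ⟨hlt.le, by simp [hlt.ne, hxρ, hx1.ne]⟩

theorem survival_Gkn_le_Akn_mul_rpow
    (n k : ℕ) (hn : 3 ≤ n) (hk : 2 ≤ k) (hk' : k ≤ n - 1)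
    (α : ℝ) (hα : 1 ≤ α) (hα' : α < n + 1 - k)
    (ρ : ℝ) (hρ : ρ ∈ Set.Ioo (0 : ℝ) 1)
    (hroot : α * (1 - Gkn n k ρ) = (1 - ρ) * gkn n k ρ) :
    ∀ x ∈ Set.Icc (0 : ℝ) 1,
      (1 - Gkn n k x ≤ (1 - Gkn n k ρ) / (1 - ρ) ^ α * (1 - x) ^ α) ∧
      (1 - Gkn n k x = (1 - Gkn n k ρ) / (1 - ρ) ^ α * (1 - x) ^ α ↔ x = ρ ∨ x = 1) :=
  survival_Gkn_le_Akn_mul_rpow_general n k hk hk' α hα hα' ρ hρ hroot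
end

section
/- For k = 2, n ≥ 3 and α ∈ [1, n−1), the unique root of α(1 − G_{2:n}(ρ)) = (1−ρ)g_{2:n}(ρ) in (0,1) is ρ = α / ((n−1)(n−α)), and the corresponding constant is A_{2:n}(α) = (1 + α/(n−α))^{n−α} (1 − α/(n−1))^{n−1−α}. -/
/-- Density of the `2`-nd order statistic of `n` iid uniforms. -/
noncomputable def g2n (n : ℕ) (x : ℝ) : ℝ :=
  n * (n - 1) * x * (1 - x) ^ (n - 2)

open Finset Real

lemma one_sub_Gkn_two {n : ℕ} (hn : 1 ≤ n) (x : ℝ) :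
    1 - Gkn n 2 x = (1 - x) ^ (n - 1) * (1 + ((n : ℝ) - 1) * x) := by
  have hrange : range (n + 1) = insert 0 (insert 1 (Icc 2 n)) := by
    ext j; simp only [mem_range, mem_insert, mem_Icc]; omega
  have hbinom : ∑ j ∈ range (n + 1), (n.choose j : ℝ) * x ^ j * (1 - x) ^ (n - j) = 1 := by
    have h := add_pow x (1 - x) n
    rw [add_sub_cancel, one_pow] at h
    exact (sum_congr rfl fun j _ => by ring).trans h.symm
  rw [hrange, sum_insert (by simp), sum_insert (by simp)] at hbinom
  simp only [Nat.choose_zero_right, Nat.choose_one_right, pow_zero, pow_one, Nat.cast_one,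
    Nat.sub_zero] at hbinom
  have hG : Gkn n 2 x = 1 - (1 - x) ^ n - n * x * (1 - x) ^ (n - 1) := by rw [Gkn]; linarith
  obtain ⟨m, rfl⟩ := Nat.exists_eq_add_of_le' hn
  rw [hG, Nat.add_sub_cancel]
  push_cast
  ring

lemma one_sub_mul_g2n {n : ℕ} (hn : 2 ≤ n) (x : ℝ) :
    (1 - x) * g2n n x = (1 - x) ^ (n - 1) * ((n : ℝ) * ((n : ℝ) - 1) * x) := by
  obtain ⟨m, rfl⟩ := Nat.exists_eq_add_of_le' hn
  simp only [g2n, Nat.add_sub_cancel, show m + 2 - 1 = m + 1 by omega, pow_succ]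
  ring

lemma root_equation_iff {n : ℕ} (hn : 2 ≤ n) (α : ℝ) {ρ : ℝ} (hρ : ρ ≠ 1) :
    α * (1 - Gkn n 2 ρ) = (1 - ρ) * g2n n ρ ↔
      α * (1 + ((n : ℝ) - 1) * ρ) = (n : ℝ) * ((n : ℝ) - 1) * ρ := by
  have hpow : (1 - ρ) ^ (n - 1) ≠ 0 := pow_ne_zero _ (sub_ne_zero.mpr hρ.symm)
  rw [one_sub_Gkn_two (by omega), one_sub_mul_g2n hn, mul_left_comm, mul_right_inj' hpow]

lemma linear_root_equation_iff {m α ρ : ℝ} (h : (m - 1) * (m - α) ≠ 0) :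
    α * (1 + (m - 1) * ρ) = m * (m - 1) * ρ ↔ ρ = α / ((m - 1) * (m - α)) := by
  rw [eq_div_iff h]
  constructor <;> intro h' <;> linear_combination -h'

lemma div_mul_sub_mem_Ioo {m α : ℝ} (hα : 0 < α) (hαm : α < m - 1) :
    α / ((m - 1) * (m - α)) ∈ Set.Ioo (0 : ℝ) 1 := by
  have hden : 0 < (m - 1) * (m - α) := mul_pos (by linarith) (by linarith)
  exact ⟨div_pos hα hden, (div_lt_one hden).mpr (by nlinarith)⟩

lemma one_add_mul_div_mul_sub {m α : ℝ} (hm : m - 1 ≠ 0) :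
    1 + (m - 1) * (α / ((m - 1) * (m - α))) = 1 + α / (m - α) := by
  rw [← mul_div_assoc, mul_div_mul_left _ _ hm]

lemma one_sub_div_mul_sub {m α : ℝ} (hm : m - 1 ≠ 0) (hmα : m - α ≠ 0) :
    1 - α / ((m - 1) * (m - α)) = (1 + α / (m - α)) * (1 - α / (m - 1)) := by
  field_simp
  ring

lemma mul_pow_mul_div_rpow {p r : ℝ} (hp : 0 < p) (hr : 0 < r) (k : ℕ) (a : ℝ) :
    (p * r) ^ k * p / (p * r) ^ a = p ^ ((k : ℝ) + 1 - a) * r ^ ((k : ℝ) - a) := by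
  rw [← rpow_natCast, mul_div_right_comm, ← rpow_sub (mul_pos hp hr), mul_rpow hp.le hr.le,
    add_sub_right_comm, rpow_add_one hp.ne']
  ring

lemma one_sub_Gkn_two_div_rpow {n : ℕ} (hn : 1 ≤ n) {α : ℝ} (hα : 0 < α)
    (hαn : α < n - 1) :
    (1 - Gkn n 2 (α / ((n - 1) * (n - α)))) / (1 - α / ((n - 1) * (n - α))) ^ α =
      (1 + α / (n - α)) ^ ((n : ℝ) - α) * (1 - α / (n - 1)) ^ ((n : ℝ) - 1 - α) := by
  have hp : 0 < 1 + α / (n - α) := add_pos one_pos (div_pos hα (by linarith))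
  have hr : 0 < 1 - α / (n - 1) := sub_pos.mpr ((div_lt_one (by linarith)).mpr hαn)
  rw [one_sub_Gkn_two hn, one_add_mul_div_mul_sub (by linarith),
    one_sub_div_mul_sub (by linarith) (by linarith), mul_pow_mul_div_rpow hp hr,
    Nat.cast_sub hn, Nat.cast_one, sub_add_cancel]

theorem root_and_constant_for_k_eq_two_general
    (n : ℕ) (α : ℝ) (hα : 1 ≤ α) (hα' : α < n - 1) :
    (α / ((n - 1) * (n - α)) ∈ Set.Ioo (0 : ℝ) 1) ∧
    (α * (1 - Gkn n 2 (α / ((n - 1) * (n - α)))) =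
      (1 - α / ((n - 1) * (n - α))) * g2n n (α / ((n - 1) * (n - α)))) ∧
    (∀ ρ ∈ Set.Ioo (0 : ℝ) 1,
      α * (1 - Gkn n 2 ρ) = (1 - ρ) * g2n n ρ → ρ = α / ((n - 1) * (n - α))) ∧
    (1 - Gkn n 2 (α / ((n - 1) * (n - α)))) / (1 - α / ((n - 1) * (n - α))) ^ α =
      (1 + α / (n - α)) ^ ((n : ℝ) - α) * (1 - α / (n - 1)) ^ ((n : ℝ) - 1 - α) := by
  have hα0 : 0 < α := by linarith
  have hn : 2 ≤ n := by
    have : (1 : ℝ) < n := by linarith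
    exact_mod_cast this
  have hden : ((n : ℝ) - 1) * (n - α) ≠ 0 := mul_ne_zero (by linarith) (by linarith)
  have hroot := div_mul_sub_mem_Ioo hα0 hα'
  have hsolve : ∀ ρ ∈ Set.Ioo (0 : ℝ) 1,
      α * (1 - Gkn n 2 ρ) = (1 - ρ) * g2n n ρ ↔ ρ = α / ((n - 1) * (n - α)) :=
    fun ρ hρ => (root_equation_iff hn α hρ.2.ne).trans (linear_root_equation_iff hden)
  exact ⟨hroot, (hsolve _ hroot).2 rfl, fun ρ hρ => (hsolve ρ hρ).1,
    one_sub_Gkn_two_div_rpow (by omega) hα0 hα'⟩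

theorem root_and_constant_for_k_eq_two
    (n : ℕ) (hn : 3 ≤ n) (α : ℝ) (hα : 1 ≤ α) (hα' : α < n - 1) :
    (α / ((n - 1) * (n - α)) ∈ Set.Ioo (0 : ℝ) 1) ∧
    (α * (1 - Gkn n 2 (α / ((n - 1) * (n - α)))) =
      (1 - α / ((n - 1) * (n - α))) * g2n n (α / ((n - 1) * (n - α)))) ∧
    (∀ ρ ∈ Set.Ioo (0 : ℝ) 1,
      α * (1 - Gkn n 2 ρ) = (1 - ρ) * g2n n ρ → ρ = α / ((n - 1) * (n - α))) ∧
    (1 - Gkn n 2 (α / ((n - 1) * (n - α)))) / (1 - α / ((n - 1) * (n - α))) ^ α =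
      (1 + α / (n - α)) ^ ((n : ℝ) - α) * (1 - α / (n - 1)) ^ ((n : ℝ) - 1 - α) :=
  root_and_constant_for_k_eq_two_general n α hα hα'
end

section
/- If X_1,...,X_n (n ≥ 2) are iid nonnegative random variables with mean μ ∈ (0,∞), then E[(min{X_1,...,X_n})^n] ≤ μ^n, with equality if and only if there is p ∈ (0,1] such that X_1 takes the values 0 and μ/p with probabilities 1−p and p. -/
/-!
Pointwise `(min X_i)^n ≤ ∏ X_i`, and by independence `E[∏ X_i] = μ^n`. Equality therefore forces
`(min X_i)^n = ∏ X_i` a.s., i.e. almost surely all `X_i` coincide as soon as none of them vanishes.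
If `ν` is the common law and `A` is Borel, the event `X_0 ∈ A \ {0}`, `X_1 ∈ Aᶜ \ {0}`,
`X_k ≠ 0` for `k ≥ 2` is then null; by independence its probability is
`ν (A \ {0}) * ν (Aᶜ \ {0}) * ν {0}ᶜ ^ (n - 2)`, and `ν {0}ᶜ > 0` because `μ > 0`. So `ν`
conditioned on `{0}ᶜ` is a zero-one measure, hence a Dirac mass `δ_c`, and `ν = (1 - p) δ_0 + p δ_c`
with `p c = μ`.
-/

open MeasureTheory ProbabilityTheory Set

theorem pow_iInf_le_prod {ι : Type*} [Fintype ι] {f : ι → ℝ} (hf : ∀ i, 0 ≤ f i) :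
    (⨅ i, f i) ^ Fintype.card ι ≤ ∏ i, f i := by
  rw [← Finset.card_univ, ← Finset.prod_const]
  exact Finset.prod_le_prod (fun _ _ => Real.iInf_nonneg hf)
    (fun i _ => ciInf_le (Finite.bddBelow_range f) i)

theorem eq_iInf_of_pow_iInf_eq_prod {ι : Type*} [Fintype ι] {f : ι → ℝ} (hf : ∀ i, 0 < f i)
    (h : (⨅ i, f i) ^ Fintype.card ι = ∏ i, f i) (j : ι) : f j = ⨅ i, f i := by
  have hle : ∀ i, ⨅ i, f i ≤ f i := ciInf_le (Finite.bddBelow_range f)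
  refine (eq_of_le_of_not_lt (hle j) fun hlt => ?_).symm
  have : Nonempty ι := ⟨j⟩
  obtain ⟨k, hk⟩ := exists_eq_ciInf_of_finite (f := f)
  have := Finset.prod_lt_prod (s := .univ) (fun _ _ => hk ▸ hf k) (fun i _ => hle i)
    ⟨j, Finset.mem_univ j, hlt⟩
  rw [Finset.prod_const, Finset.card_univ] at this
  exact this.ne h

theorem pow_iInf_eq_prod_of_forall_eq_zero_or_eq {ι : Type*} [Fintype ι] {f : ι → ℝ} {c : ℝ}
    (hc : 0 ≤ c) (hf : ∀ i, f i = 0 ∨ f i = c) :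
    (⨅ i, f i) ^ Fintype.card ι = ∏ i, f i := by
  by_cases hzero : ∃ i, f i = 0
  · obtain ⟨i, hi⟩ := hzero
    have : Nonempty ι := ⟨i⟩
    have hinf : ⨅ i, f i = 0 := le_antisymm (hi ▸ ciInf_le (Finite.bddBelow_range f) i)
      (Real.iInf_nonneg fun j => by rcases hf j with h | h <;> simp [h, hc])
    rw [hinf, zero_pow Fintype.card_ne_zero, Finset.prod_eq_zero (Finset.mem_univ i) hi]
  · push Not at hzero
    obtain rfl : f = fun _ => c := funext fun i => (hf i).resolve_left (hzero i)
    cases isEmpty_or_nonempty ι <;> simp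

theorem integral_pow_iInf_le_integral_prod {Ω ι : Type*} [MeasurableSpace Ω] [Fintype ι]
    {P : Measure Ω} {X : ι → Ω → ℝ} (hmeas : ∀ i, Measurable (X i)) (hnonneg : ∀ i ω, 0 ≤ X i ω)
    (hint : Integrable (fun ω => ∏ i, X i ω) P) :
    ∫ ω, (⨅ i, X i ω) ^ Fintype.card ι ∂P ≤ ∫ ω, ∏ i, X i ω ∂P ∧
      (∫ ω, (⨅ i, X i ω) ^ Fintype.card ι ∂P = ∫ ω, ∏ i, X i ω ∂P ↔
        ∀ᵐ ω ∂P, (⨅ i, X i ω) ^ Fintype.card ι = ∏ i, X i ω) := by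
  have hle : ∀ ω, (⨅ i, X i ω) ^ Fintype.card ι ≤ ∏ i, X i ω :=
    fun ω => pow_iInf_le_prod (hnonneg · ω)
  have hmin_int : Integrable (fun ω => (⨅ i, X i ω) ^ Fintype.card ι) P :=
    hint.mono' ((Measurable.iInf hmeas).pow_const _).aestronglyMeasurable
      (ae_of_all _ fun ω => by
        rw [Real.norm_of_nonneg (pow_nonneg (Real.iInf_nonneg (hnonneg · ω)) _)]
        exact hle ω)
  exact ⟨integral_mono hmin_int hint hle,
    integral_eq_iff_of_ae_le hmin_int hint (ae_of_all _ hle)⟩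

theorem exists_measure_diff_singleton_eq_zero {α : Type*} [MeasurableSpace α]
    [StandardBorelSpace α] {ν : Measure α} [IsFiniteMeasure ν] {S : Set α}
    (hS : MeasurableSet S) (hνS : ν S ≠ 0)
    (h : ∀ A, MeasurableSet A → ν (S ∩ A) = 0 ∨ ν (S \ A) = 0) :
    ∃ c ∈ S, ν (S \ {c}) = 0 := by
  have : IsProbabilityMeasure ν[|S] := cond_isProbabilityMeasure hνS
  have : IsZeroOneMeasure ν[|S] := ⟨fun A hA => by
    rcases h A hA with hA0 | hA1
    · exact .inl (by rw [cond_apply hS, hA0, mul_zero])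
    · refine .inr ((prob_compl_eq_zero_iff hA).1 ?_)
      rw [cond_apply hS, ← sdiff_eq, hA1, mul_zero]⟩
  obtain ⟨c, hc⟩ := IsZeroOneMeasure.exists_eq_dirac (μ := ν[|S])
  refine ⟨c, ?_, ?_⟩
  · have h1 : ν[S|S] = 1 := cond_apply_self hνS (measure_ne_top ν S)
    rw [hc, Measure.dirac_apply' _ hS] at h1
    by_contra hcS
    simp [hcS] at h1
  · have h0 : ν[{c}ᶜ|S] = 0 := by
      rw [hc, Measure.dirac_apply' _ (measurableSet_singleton c).compl]; simp
    rw [cond_apply hS, mul_eq_zero, ENNReal.inv_eq_zero] at h0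
    simpa [sdiff_eq, measure_ne_top] using h0

theorem exists_eq_smul_dirac_add_smul_dirac_of_ae_eq_zero_or_eq {ν : Measure ℝ}
    [IsProbabilityMeasure ν] {c μ : ℝ} (hc : c ≠ 0) (hsupp : ∀ᵐ x ∂ν, x = 0 ∨ x = c)
    (hmean : ∫ x, x ∂ν = μ) (hμ : 0 < μ) :
    ∃ p : ℝ, 0 < p ∧ p ≤ 1 ∧
      ν = ENNReal.ofReal (1 - p) • Measure.dirac 0 + ENNReal.ofReal p • Measure.dirac (μ / p) := by
  have hν := (Measure.ae_eq_or_eq_iff_eq_dirac_add_dirac hc.symm).1 hsupp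
  set p := ν.real {c}
  have hpc : p * c = μ := by
    rw [← hmean, hν, integral_add_measure, integral_smul_measure, integral_smul_measure,
      integral_dirac, integral_dirac]
    · simp [p, measureReal_def]
    all_goals exact (integrable_dirac enorm_lt_top).smul_measure (measure_ne_top ν _)
  have hmass : ν {0} + ν {c} = 1 := by
    simpa using congrArg (fun m : Measure ℝ => m univ) hν.symm
  have hp : 0 < p := by
    refine measureReal_nonneg.lt_of_ne fun h : 0 = p => ?_
    rw [← h, zero_mul] at hpc
    exact hμ.ne hpc
  refine ⟨p, hp, measureReal_le_one, ?_⟩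
  rw [show μ / p = c by rw [← hpc]; field_simp, ENNReal.ofReal_sub _ measureReal_nonneg,
    ENNReal.ofReal_one, ofReal_measureReal,
    ← ENNReal.eq_sub_of_add_eq (measure_ne_top ν _) hmass]
  exact hν

theorem ae_eq_or_eq_smul_dirac_add_smul_dirac {α : Type*} [MeasurableSpace α]
    [MeasurableSingletonClass α] (a b : ENNReal) (x₁ x₂ : α) :
    ∀ᵐ x ∂(a • Measure.dirac x₁ + b • Measure.dirac x₂), x = x₁ ∨ x = x₂ := by
  rw [ae_add_measure_iff]
  exact ⟨Measure.ae_smul_measure (by simp [ae_dirac_eq]) _,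
    Measure.ae_smul_measure (by simp [ae_dirac_eq]) _⟩

namespace ProbabilityTheory

theorem iIndepFun.integrable_fun_prod {Ω ι 𝕜 : Type*} [MeasurableSpace Ω] [Fintype ι] [RCLike 𝕜]
    {P : Measure Ω} {X : ι → Ω → 𝕜} (hX : iIndepFun X P)
    (hmeas : ∀ i, AEMeasurable (X i) P) (hint : ∀ i, Integrable (X i) P) :
    Integrable (fun ω => ∏ i, X i ω) P := by
  have := hX.isProbabilityMeasure
  have : Integrable (fun x : ι → 𝕜 => ∏ i, x i) (P.map fun ω i => X i ω) := by
    rw [hX.map_fun_eq_pi_map hmeas]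
    exact Integrable.fintype_prod fun i => (integrable_map_measure aestronglyMeasurable_id
      (hmeas i)).2 (hint i)
  exact this.comp_aemeasurable (aemeasurable_pi_lambda _ hmeas)

theorem iIndepFun.measure_inter_eq_zero_or_measure_diff_eq_zero {Ω α ι : Type*} [MeasurableSpace Ω]
    [MeasurableSpace α] [Fintype ι] {P : Measure Ω} {X : ι → Ω → α}
    (hX : iIndepFun X P) (hmeas : ∀ i, Measurable (X i)) {ν : Measure α}
    (hlaw : ∀ i, P.map (X i) = ν) {S : Set α} (hS : MeasurableSet S) (hνS : ν S ≠ 0)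
    {i j : ι} (hij : i ≠ j) (hdiag : ∀ᵐ ω ∂P, (∀ k, X k ω ∈ S) → X i ω = X j ω)
    {A : Set α} (hA : MeasurableSet A) :
    ν (S ∩ A) = 0 ∨ ν (S \ A) = 0 := by
  classical
  let s : ι → Set α := fun k => if k = i then S ∩ A else if k = j then S \ A else S
  have hsS : ∀ k, s k ⊆ S := fun k => by
    dsimp only [s]; split_ifs <;> simp [inter_subset_left]
  have hs : ∀ k, MeasurableSet (s k) := fun k => by
    dsimp only [s]; split_ifs <;> measurability
  have hnull : P (⋂ k, X k ⁻¹' s k) = 0 := by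
    refine measure_mono_null (fun ω hω => ?_) (ae_iff.1 hdiag)
    rw [mem_iInter] at hω
    have hi : X i ω ∈ S ∩ A := by simpa [s] using hω i
    have hj : X j ω ∈ S \ A := by simpa [s, hij.symm] using hω j
    exact fun h => hj.2 (h (fun k => hsS k (hω k)) ▸ hi.2)
  rw [hX.meas_iInter (fun k => ⟨s k, hs k, rfl⟩)] at hnull
  obtain ⟨k, -, hk⟩ := Finset.prod_eq_zero_iff.1 hnull
  rw [← Measure.map_apply (hmeas k) (hs k), hlaw k] at hk
  by_cases hki : k = i
  · simpa [s, hki] using Or.inl hk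
  by_cases hkj : k = j
  · simpa [s, hkj, hij.symm] using Or.inr hk
  exact absurd (by simpa [s, hki, hkj] using hk) hνS

theorem iIndepFun.exists_map_eq_smul_dirac_add_smul_dirac {Ω ι : Type*} [MeasurableSpace Ω]
    [Fintype ι] {P : Measure Ω} {X : ι → Ω → ℝ} (hX : iIndepFun X P)
    (hmeas : ∀ i, Measurable (X i)) {ν : Measure ℝ} [IsProbabilityMeasure ν]
    (hlaw : ∀ i, P.map (X i) = ν) {μ : ℝ} (hμ : 0 < μ) (hmean : ∫ x, x ∂ν = μ) {i j : ι}
    (hij : i ≠ j) (hdiag : ∀ᵐ ω ∂P, (∀ k, X k ω ≠ 0) → X i ω = X j ω) :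
    ∃ p : ℝ, 0 < p ∧ p ≤ 1 ∧
      ν = ENNReal.ofReal (1 - p) • Measure.dirac 0 + ENNReal.ofReal p • Measure.dirac (μ / p) := by
  have hν : ν {0}ᶜ ≠ 0 := fun h0 => hμ.ne' <| hmean ▸ integral_eq_zero_of_ae
    (by filter_upwards [measure_eq_zero_iff_ae_notMem.1 h0] with x hx; simpa using hx)
  obtain ⟨c, hc, hνc⟩ := exists_measure_diff_singleton_eq_zero
    (measurableSet_singleton 0).compl hν fun A hA =>
      hX.measure_inter_eq_zero_or_measure_diff_eq_zero hmeas hlaw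
        (measurableSet_singleton 0).compl hν hij hdiag hA
  refine exists_eq_smul_dirac_add_smul_dirac_of_ae_eq_zero_or_eq hc ?_ hmean hμ
  filter_upwards [measure_eq_zero_iff_ae_notMem.1 hνc] with x hx
  simpa [or_iff_not_imp_left] using hx

end ProbabilityTheory

theorem moment_min_le_pow_mean_iid
    {Ω : Type*} [MeasurableSpace Ω] (P : Measure Ω) [IsProbabilityMeasure P]
    {n : ℕ} (hn : 2 ≤ n) (X : Fin n → Ω → ℝ) (μ : ℝ) (hμ : 0 < μ)
    (hmeas : ∀ i, Measurable (X i))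
    (hnonneg : ∀ i ω, 0 ≤ X i ω)
    (hindep : iIndepFun X P)
    (hident : ∀ i j, IdentDistrib (X i) (X j) P P)
    (hint : ∀ i, Integrable (X i) P)
    (hmean : ∀ i, ∫ ω, X i ω ∂P = μ) :
    (∫ ω, (⨅ i, X i ω) ^ n ∂P ≤ μ ^ n) ∧
    (∫ ω, (⨅ i, X i ω) ^ n ∂P = μ ^ n ↔
      ∃ p : ℝ, 0 < p ∧ p ≤ 1 ∧
        Measure.map (X ⟨0, by omega⟩) P =
          ENNReal.ofReal (1 - p) • Measure.dirac (0 : ℝ) +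
            ENNReal.ofReal p • Measure.dirac (μ / p)) := by
  set i₀ : Fin n := ⟨0, by omega⟩
  have hlaw : ∀ i, P.map (X i) = P.map (X i₀) := fun i => (hident i i₀).map_eq
  have := Measure.isProbabilityMeasure_map (μ := P) (hmeas i₀).aemeasurable
  have hprod : ∫ ω, ∏ i, X i ω ∂P = μ ^ n := by
    rw [hindep.integral_fun_prod_eq_prod_integral fun i => (hmeas i).aestronglyMeasurable]
    simp [hmean]
  obtain ⟨hle, heq_iff⟩ := integral_pow_iInf_le_integral_prod hmeas hnonneg
    (hindep.integrable_fun_prod (fun i => (hmeas i).aemeasurable) hint)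
  rw [Fintype.card_fin, hprod] at hle heq_iff
  refine ⟨hle, heq_iff.trans ⟨fun h => ?_, ?_⟩⟩
  · refine hindep.exists_map_eq_smul_dirac_add_smul_dirac hmeas hlaw hμ
      ((integral_map (hmeas i₀).aemeasurable aestronglyMeasurable_id).trans (hmean i₀))
      (i := i₀) (j := ⟨1, by omega⟩) (by simp [Fin.ext_iff, i₀]) ?_
    filter_upwards [h] with ω hω hne
    have := eq_iInf_of_pow_iInf_eq_prod (fun k => (hnonneg k ω).lt_of_ne' (hne k))
      (by simpa using hω)
    exact (this _).trans (this _).symm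
  · rintro ⟨p, hp, -, hlaw₀⟩
    have hsupp : ∀ i, ∀ᵐ ω ∂P, X i ω = 0 ∨ X i ω = μ / p := fun i =>
      ae_of_ae_map (hmeas i).aemeasurable
        (by rw [hlaw i, hlaw₀]; exact ae_eq_or_eq_smul_dirac_add_smul_dirac ..)
    filter_upwards [ae_all_iff.2 hsupp] with ω hω
    simpa using pow_iInf_eq_prod_of_forall_eq_zero_or_eq (div_pos hμ hp).le hω
end

section
/- Let X_1,...,X_n be independent nonnegative random variables with E[X_i] = μ_i and 0 < μ_1 ≤ μ_2 ≤ ... ≤ μ_n. Then for every α ∈ (k−1, k] with k ∈ {1,...,n}, E[(min{X_1,...,X_n})^α] ≤ μ_1 ⋯ μ_{k−1} (μ_k)^{α−k+1}. -/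
/-!
Give the variables exponents `p i ∈ [0, 1]` summing to `α` (here `1` for the first `k - 1`,
`α - k + 1` for the `k`-th, `0` for the rest). The minimum is below each `X i`, so
`(min X)^α = ∏ (min X)^(p i) ≤ ∏ X i ^ (p i)`; by independence the expectation of the right side
factorizes, and Jensen for the concave `x ↦ x ^ p` gives `E[X ^ p] ≤ (E X) ^ p`.
-/

open MeasureTheory ProbabilityTheory Finset

section

variable {Ω : Type*} [MeasurableSpace Ω] {μ : Measure Ω}

lemma ProbabilityTheory.iIndepFun.integrable_fun_prod_comp {𝕜 ι : Type*} [NormedCommRing 𝕜]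
    [Fintype ι] {𝓧 : ι → Type*} {m𝓧 : ∀ i, MeasurableSpace (𝓧 i)} {X : (i : ι) → Ω → 𝓧 i}
    {f : (i : ι) → 𝓧 i → 𝕜} (hX : iIndepFun X μ) (mX : ∀ i, AEMeasurable (X i) μ)
    (hf : ∀ i, Integrable (f i) (μ.map (X i))) :
    Integrable (fun ω ↦ ∏ i, f i (X i ω)) μ := by
  have := hX.isProbabilityMeasure
  have hprod : Integrable (fun x : (i : ι) → 𝓧 i ↦ ∏ i, f i (x i)) (μ.map fun ω i ↦ X i ω) := by
    rw [hX.map_fun_eq_pi_map mX]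
    exact Integrable.fintype_prod_dep hf
  exact hprod.comp_aemeasurable (aemeasurable_pi_lambda _ mX)

lemma MeasureTheory.Integrable.rpow_of_le_one [IsFiniteMeasure μ] {X : Ω → ℝ}
    (hX : Integrable X μ) (hX0 : 0 ≤ᵐ[μ] X) {p : ℝ} (hp0 : 0 ≤ p) (hp1 : p ≤ 1) :
    Integrable (fun ω ↦ X ω ^ p) μ := by
  have hmem : MemLp (fun ω ↦ ‖X ω‖ ^ (ENNReal.ofReal p).toReal) 1 μ :=
    ((memLp_one_iff_integrable.2 hX).norm_rpow_div _).mono_exponent <| by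
      rw [ENNReal.le_div_iff_mul_le (by simp) (by simp), one_mul]
      exact ENNReal.ofReal_le_one.2 hp1
  rw [ENNReal.toReal_ofReal hp0] at hmem
  refine (memLp_one_iff_integrable.1 hmem).congr ?_
  filter_upwards [hX0] with ω hω
  rw [Real.norm_of_nonneg hω]

lemma integral_rpow_le_rpow_integral [IsProbabilityMeasure μ] {X : Ω → ℝ}
    (hX : Integrable X μ) (hX0 : 0 ≤ᵐ[μ] X) {p : ℝ} (hp0 : 0 ≤ p) (hp1 : p ≤ 1) :
    ∫ ω, X ω ^ p ∂μ ≤ (∫ ω, X ω ∂μ) ^ p :=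
  (Real.concaveOn_rpow hp0 hp1).le_map_integral (Real.continuous_rpow_const hp0).continuousOn
    isClosed_Ici hX0 hX (hX.rpow_of_le_one hX0 hp0 hp1)

lemma Real.iInf_rpow_sum_le_prod_rpow {ι : Type*} [Fintype ι] {x : ι → ℝ} (hx : ∀ i, 0 ≤ x i)
    {p : ι → ℝ} (hp : ∀ i, 0 ≤ p i) :
    (⨅ i, x i) ^ (∑ i, p i) ≤ ∏ i, x i ^ p i := by
  have hinf : 0 ≤ ⨅ i, x i := Real.iInf_nonneg hx
  rw [Real.rpow_sum_of_nonneg hinf fun i _ ↦ hp i]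
  exact prod_le_prod (fun i _ ↦ by positivity) fun i _ ↦
    Real.rpow_le_rpow hinf (ciInf_le ⟨0, Set.forall_mem_range.2 hx⟩ i) (hp i)

theorem integral_iInf_rpow_le_prod_integral_rpow [IsProbabilityMeasure μ] {ι : Type*}
    [Fintype ι] {X : ι → Ω → ℝ} (hX : iIndepFun X μ) (hint : ∀ i, Integrable (X i) μ)
    (hnonneg : ∀ i ω, 0 ≤ X i ω) {p : ι → ℝ} (hp0 : ∀ i, 0 ≤ p i) (hp1 : ∀ i, p i ≤ 1) :
    ∫ ω, (⨅ i, X i ω) ^ (∑ i, p i) ∂μ ≤ ∏ i, (∫ ω, X i ω ∂μ) ^ p i := by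
  have mX i : AEMeasurable (X i) μ := (hint i).aemeasurable
  have hX0 i : 0 ≤ᵐ[μ] X i := .of_forall (hnonneg i)
  have hrpow i : AEStronglyMeasurable (fun x : ℝ ↦ x ^ p i) (μ.map (X i)) :=
    (Real.continuous_rpow_const (hp0 i)).aestronglyMeasurable
  have hprod : Integrable (fun ω ↦ ∏ i, X i ω ^ p i) μ :=
    hX.integrable_fun_prod_comp mX fun i ↦ (integrable_map_measure (hrpow i) (mX i)).2
      ((hint i).rpow_of_le_one (hX0 i) (hp0 i) (hp1 i))
  calc ∫ ω, (⨅ i, X i ω) ^ (∑ i, p i) ∂μ ≤ ∫ ω, ∏ i, X i ω ^ p i ∂μ :=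
        integral_mono_of_nonneg
          (.of_forall fun ω ↦ Real.rpow_nonneg (Real.iInf_nonneg (hnonneg · ω)) _) hprod
          (.of_forall fun ω ↦ Real.iInf_rpow_sum_le_prod_rpow (hnonneg · ω) hp0)
    _ = ∏ i, ∫ ω, X i ω ^ p i ∂μ := hX.integral_fun_prod_comp mX hrpow
    _ ≤ ∏ i, (∫ ω, X i ω ∂μ) ^ p i :=
        prod_le_prod (fun i _ ↦ integral_nonneg fun ω ↦ Real.rpow_nonneg (hnonneg i ω) _) fun i _ ↦
          integral_rpow_le_rpow_integral (hint i) (hX0 i) (hp0 i) (hp1 i)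

end

section Weights

variable {ι : Type*} [Fintype ι] [DecidableEq ι] {t : Finset ι} {j : ι}

lemma sum_ite_mem_ite_eq (hj : j ∉ t) (e : ℝ) :
    ∑ i, (if i ∈ t then 1 else if i = j then e else 0 : ℝ) = #t + e := by
  rw [sum_ite, sum_ite_eq']
  simp [hj]

lemma prod_rpow_ite_mem_ite_eq (hj : j ∉ t) (a : ι → ℝ) (e : ℝ) :
    ∏ i, a i ^ (if i ∈ t then 1 else if i = j then e else 0 : ℝ) = (∏ i ∈ t, a i) * a j ^ e :=
  calc ∏ i, a i ^ (if i ∈ t then 1 else if i = j then e else 0 : ℝ)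
      = ∏ i, if i ∈ t then a i else if i = j then a i ^ e else 1 :=
        prod_congr rfl fun i _ ↦ by split_ifs <;> simp
    _ = (∏ i ∈ t, a i) * a j ^ e := by
        rw [prod_ite, prod_ite_eq']
        simp [hj]

end Weights

theorem moment_min_le_of_sorted_means
    {Ω : Type*} [MeasurableSpace Ω] (P : Measure Ω) [IsProbabilityMeasure P]
    {n : ℕ} (X : Fin n → Ω → ℝ) (μ : Fin n → ℝ)
    (hnonneg : ∀ i ω, 0 ≤ X i ω)
    (hindep : iIndepFun X P)
    (hint : ∀ i, Integrable (X i) P)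
    (hmean : ∀ i, ∫ ω, X i ω ∂P = μ i)
    (k : ℕ) (hk : 1 ≤ k) (hkn : k ≤ n)
    (α : ℝ) (hα : (k : ℝ) - 1 < α) (hα' : α ≤ k) :
    ∫ ω, (⨅ i, X i ω) ^ α ∂P ≤
      (∏ i ∈ Finset.univ.filter (fun i : Fin n => (i : ℕ) < k - 1), μ i) *
        (μ ⟨k - 1, by omega⟩) ^ (α - k + 1) := by
  set t := Finset.univ.filter fun i : Fin n ↦ (i : ℕ) < k - 1
  set j : Fin n := ⟨k - 1, by omega⟩
  have hj : j ∉ t := by simp [t, j]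
  have hsum : (#t : ℝ) + (α - k + 1) = α := by
    rw [Fin.card_filter_val_lt, min_eq_right (by omega), Nat.cast_sub hk, Nat.cast_one]
    ring
  have key := integral_iInf_rpow_le_prod_integral_rpow hindep hint hnonneg
    (p := fun i ↦ if i ∈ t then 1 else if i = j then α - k + 1 else 0)
    (fun i ↦ by split_ifs <;> linarith) (fun i ↦ by split_ifs <;> linarith)
  simpa only [sum_ite_mem_ite_eq hj, hsum, hmean, prod_rpow_ite_mem_ite_eq hj] using key
end
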